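/- arXiv:1904.00072 — 8 statements merged into one kernel-verified Lean document; each statement's English description precedes it below -/
import Mathlib

section
/- Let n ≥ 1 and d ≥ 1 be integers and let Q(x) = A_0 + Σ_{α=1}^d A_α s_α(x) + Σ_{α=1}^d A_{αα} s_{αα}(x). Then Q(x_1, …, x_n) ≥ 0 for all tuples (x_1, …, x_n) of unit vectors x_i ∈ S^{d−1} if and only if Q(x_1, …, x_n) ≥ 0 for all tuples (x_1, …, x_n) of unit vectors x_i ∈ S^{d−1} such that the set {x_1, …, x_n} has cardinality at most 2d. -/
open scoped BigOperators

/-- `sLin n d α x = ∑ i, ξ_{i,α}` -/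
noncomputable def sLin (n d : ℕ) (α : Fin d) (x : Fin n → Fin d → ℝ) : ℝ :=
  ∑ i, x i α

/-- `sQuad n d α x = ∑_{i ≠ j} ξ_{i,α} ξ_{j,α}` (sum over ordered pairs). -/
noncomputable def sQuad (n d : ℕ) (α : Fin d) (x : Fin n → Fin d → ℝ) : ℝ :=
  ∑ i, ∑ j, if i = j then 0 else x i α * x j α

/-- `Qpoly n d A0 A B x = A0 + ∑ α A_α s_α(x) + ∑ α A_{αα} s_{αα}(x)` -/
noncomputable def Qpoly (n d : ℕ) (A0 : ℝ) (A B : Fin d → ℝ)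
    (x : Fin n → Fin d → ℝ) : ℝ :=
  A0 + ∑ α, A α * sLin n d α x + ∑ α, B α * sQuad n d α x

/-!
Fix the column sums `s_α(x)`. On the unit tuples with these column sums, `Q` differs from a
constant by `-∑ α, A_{αα} ∑ i, ξ_{i,α}²`, so by compactness it attains its minimum there at some
`z`, and Lagrange multipliers for the row and column constraints give
`(λ_i - ν A_{αα}) ξ_{i,α} = μ_α`. When the `A_{αα}` are distinct, each row of `z` is a unit vector
`u` with `(v - c_α) u_α = μ_α`, where `v = λ_i` and `c = ν A_{··}`. For each `v` there are at most
as many such `u` as the multiplicity of `v` as a root of the degree `2d` polynomial obtained by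
clearing denominators in `∑ α, μ_α² / (v - c_α)² = 1`; hence `z` has at most `2d` distinct rows.
Arbitrary `A_{αα}` are reached by perturbing them to distinct values, which changes `Q` by `O(t)`
uniformly on the compact set of unit tuples.
-/

open Polynomial Finset Filter Topology

theorem Polynomial.sum_rootMultiplicity_le_natDegree {R : Type*} [CommRing R] [IsDomain R]
    [DecidableEq R] (p : R[X]) (s : Finset R) :
    ∑ a ∈ s, p.rootMultiplicity a ≤ p.natDegree :=
  calc ∑ a ∈ s, p.rootMultiplicity a = ∑ a ∈ s, p.roots.count a := by simp only [count_roots]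
    _ ≤ ∑ a ∈ s ∪ p.roots.toFinset, p.roots.count a := sum_le_sum_of_subset subset_union_left
    _ = Multiset.card p.roots :=
        Multiset.sum_count_eq_card fun _ ha => mem_union_right _ (Multiset.mem_toFinset.2 ha)
    _ ≤ p.natDegree := card_roots' p

section Secular

variable {d : ℕ}

noncomputable def secularPoly (c m : Fin d → ℝ) : ℝ[X] :=
  ∏ α, (X - C (c α)) ^ 2 - ∑ α, C (m α ^ 2) * ∏ β ∈ univ.erase α, (X - C (c β)) ^ 2

theorem degree_secularPoly_sub_lt (c m : Fin d → ℝ) :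
    (∑ α, C (m α ^ 2) * ∏ β ∈ univ.erase α, (X - C (c β)) ^ 2).degree
      < (∏ α, (X - C (c α)) ^ 2).degree := by
  have hmonic : ∀ s : Finset (Fin d), (∏ β ∈ s, (X - C (c β)) ^ 2).Monic :=
    fun s => monic_prod_of_monic _ _ fun β _ => (monic_X_sub_C _).pow 2
  refine (degree_sum_le _ _).trans_lt ((Finset.sup_lt_iff ?_).2 fun α _ => ?_)
  · exact WithBot.bot_lt_iff_ne_bot.2 (degree_eq_bot.not.2 (hmonic univ).ne_zero)
  rw [← mul_prod_erase univ _ (mem_univ α), ← smul_eq_C_mul]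
  refine (degree_smul_le _ _).trans_lt (degree_lt_degree ?_)
  rw [((monic_X_sub_C _).pow 2).natDegree_mul (hmonic _), natDegree_pow, natDegree_X_sub_C]
  omega

theorem secularPoly_monic (c m : Fin d → ℝ) : (secularPoly c m).Monic :=
  (monic_prod_of_monic _ _ fun _ _ => (monic_X_sub_C _).pow 2).sub_of_left
    (degree_secularPoly_sub_lt c m)

theorem natDegree_secularPoly (c m : Fin d → ℝ) : (secularPoly c m).natDegree = 2 * d := by
  rw [secularPoly, natDegree_eq_of_degree_eq (degree_sub_eq_left_of_degree_lt
    (degree_secularPoly_sub_lt c m)), natDegree_prod_of_monic _ _ fun _ _ =>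
    (monic_X_sub_C _).pow 2]
  simp [mul_comm]

def secularSet (c m : Fin d → ℝ) (v : ℝ) : Set (Fin d → ℝ) :=
  {u | ∑ α, u α ^ 2 = 1 ∧ ∀ α, (v - c α) * u α = m α}

variable {c m : Fin d → ℝ} {v : ℝ} {u u' : Fin d → ℝ}

theorem secularPoly_isRoot (hu : u ∈ secularSet c m v) : (secularPoly c m).IsRoot v := by
  obtain ⟨hunit, hm⟩ := hu
  have hterm : ∀ α, m α ^ 2 * ∏ β ∈ univ.erase α, (v - c β) ^ 2
      = u α ^ 2 * ∏ β, (v - c β) ^ 2 := fun α => by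
    rw [← hm, ← mul_prod_erase univ (fun β => (v - c β) ^ 2) (mem_univ α)]
    ring
  simp only [IsRoot, secularPoly, eval_sub, eval_prod, eval_finsetSum, eval_mul, eval_pow,
    eval_C, eval_X, hterm, ← sum_mul, hunit]
  ring

theorem sq_dvd_secularPoly {α₀ : Fin d} (hm : m α₀ = 0) :
    (X - C (c α₀)) ^ 2 ∣ secularPoly c m := by
  refine dvd_sub (dvd_prod_of_mem (fun α => (X - C (c α)) ^ 2) (mem_univ α₀))
    (dvd_sum fun α _ => ?_)
  rcases eq_or_ne α α₀ with rfl | hα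
  · simp [hm]
  · exact (dvd_prod_of_mem (fun β => (X - C (c β)) ^ 2)
      (mem_erase.2 ⟨hα.symm, mem_univ _⟩)).mul_left _

theorem secularSet_apply_eq (hu : u ∈ secularSet c m v) (hu' : u' ∈ secularSet c m v)
    {β : Fin d} (hβ : c β ≠ v) : u β = u' β :=
  mul_left_cancel₀ (sub_ne_zero.2 hβ.symm) ((hu.2 β).trans (hu'.2 β).symm)

theorem secularSet_subset_singleton (hv : ∀ α, c α ≠ v) (hu : u ∈ secularSet c m v) :
    secularSet c m v ⊆ {u} := fun _ hu' =>
  funext fun β => secularSet_apply_eq hu' hu (hv β)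

theorem secularSet_subset_pair {α₀ : Fin d} (hc : {α | c α = c α₀}.Subsingleton)
    (hu : u ∈ secularSet c m (c α₀)) :
    secularSet c m (c α₀) ⊆ {u, Function.update u α₀ (-u α₀)} := by
  intro u' hu'
  have hrest : ∀ β ≠ α₀, u' β = u β := fun β hβ =>
    secularSet_apply_eq hu' hu fun h => hβ (hc h rfl)
  have hsq : u' α₀ ^ 2 = u α₀ ^ 2 := by
    have h := hu'.1.trans hu.1.symm
    rw [← add_sum_erase univ _ (mem_univ α₀), ← add_sum_erase univ _ (mem_univ α₀),
      sum_congr rfl fun β hβ => by rw [hrest β (ne_of_mem_erase hβ)]] at h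
    linarith
  rcases sq_eq_sq_iff_eq_or_eq_neg.1 hsq with h | h
  · left
    funext β
    rcases eq_or_ne β α₀ with rfl | hβ
    exacts [h, hrest β hβ]
  · right
    funext β
    rcases eq_or_ne β α₀ with rfl | hβ
    · simp [h]
    · simp [hβ, hrest β hβ]

theorem encard_secularSet_le_rootMultiplicity (hc : {α | c α = v}.Subsingleton) :
    (secularSet c m v).encard ≤ (secularPoly c m).rootMultiplicity v := by
  rcases (secularSet c m v).eq_empty_or_nonempty with h | ⟨u, hu⟩
  · simp [h]
  have hP := (secularPoly_monic c m).ne_zero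
  by_cases hv : ∃ α₀, c α₀ = v
  · obtain ⟨α₀, rfl⟩ := hv
    have hdvd : (X - C (c α₀)) ^ 2 ∣ secularPoly c m :=
      sq_dvd_secularPoly (by simpa using (hu.2 α₀).symm)
    calc (secularSet c m (c α₀)).encard
        ≤ ({u, Function.update u α₀ (-u α₀)} : Set (Fin d → ℝ)).encard :=
          Set.encard_le_encard (secularSet_subset_pair hc hu)
      _ ≤ 2 := (Set.encard_insert_le _ _).trans (by rw [Set.encard_singleton]; norm_num)
      _ ≤ (secularPoly c m).rootMultiplicity (c α₀) := by
          exact_mod_cast (le_rootMultiplicity_iff hP).2 hdvd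
  · push Not at hv
    calc (secularSet c m v).encard ≤ ({u} : Set (Fin d → ℝ)).encard :=
          Set.encard_le_encard (secularSet_subset_singleton hv hu)
      _ = 1 := Set.encard_singleton u
      _ ≤ (secularPoly c m).rootMultiplicity v := by
          exact_mod_cast (le_rootMultiplicity_iff hP).2
            (by rw [pow_one]; exact dvd_iff_isRoot.2 (secularPoly_isRoot hu))

end Secular

section Stationary

variable {n d : ℕ} {lam : Fin n → ℝ} {c mu : Fin d → ℝ} {y : Fin n → Fin d → ℝ}

theorem ncard_range_le_of_stationary (hy : ∀ i, ∑ α, y i α ^ 2 = 1)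
    (hstat : ∀ i α, (lam i - c α) * y i α = mu α) (hc : ∀ i, {α | c α = lam i}.Subsingleton) :
    (Set.range y).ncard ≤ 2 * d := by
  classical
  set V := univ.image lam
  have hsub : Set.range y ⊆ ⋃ v ∈ V, secularSet c mu v := by
    rintro _ ⟨i, rfl⟩
    exact Set.mem_biUnion (mem_image_of_mem lam (mem_univ i)) ⟨hy i, hstat i⟩
  have hroots : ∀ v ∈ V, (secularSet c mu v).encard ≤ (secularPoly c mu).rootMultiplicity v := by
    intro v hv
    obtain ⟨i, -, rfl⟩ := mem_image.1 hv
    exact encard_secularSet_le_rootMultiplicity (hc i)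
  have h : (Set.range y).encard ≤ (2 * d : ℕ) :=
    calc (Set.range y).encard ≤ ∑ v ∈ V, (secularSet c mu v).encard :=
          (Set.encard_le_encard hsub).trans (V.set_encard_biUnion_le _)
      _ ≤ ∑ v ∈ V, ((secularPoly c mu).rootMultiplicity v : ℕ∞) := sum_le_sum hroots
      _ ≤ (2 * d : ℕ) := by
          rw [← natDegree_secularPoly c mu]
          exact_mod_cast (secularPoly c mu).sum_rootMultiplicity_le_natDegree V
  rwa [← (Set.finite_range y).cast_ncard_eq, Nat.cast_le] at h

theorem ncard_range_le_of_lagrange {w : Fin d → ℝ} (hw : Function.Injective w) {ν : ℝ}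
    (hy : ∀ i, ∑ α, y i α ^ 2 = 1) (hne : ¬(lam = 0 ∧ mu = 0 ∧ ν = 0))
    (hstat : ∀ i α, (lam i - ν * w α) * y i α = mu α) :
    (Set.range y).ncard ≤ 2 * d := by
  refine ncard_range_le_of_stationary hy hstat fun i => ?_
  rcases eq_or_ne ν 0 with rfl | hν
  · suffices lam i ≠ 0 by simp [this.symm]
    intro hi
    have hmu : mu = 0 := funext fun α => by simp [← hstat i α, hi]
    refine hne ⟨funext fun j => ?_, hmu, rfl⟩
    have hzero : ∀ α, lam j * y j α = 0 := fun α => by simpa [hmu] using hstat j α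
    have : lam j ^ 2 = ∑ α, (lam j * y j α) ^ 2 := by simp [mul_pow, ← mul_sum, hy j]
    simpa [hzero] using this
  · exact fun α hα β hβ => hw (mul_left_cancel₀ hν (hα.trans hβ.symm))

end Stationary

section Extremal

variable {n d : ℕ}

theorem exists_lagrange_multipliers (w : Fin d → ℝ) {z : Fin n → Fin d → ℝ}
    (hz : IsLocalExtrOn (fun y => ∑ α, w α * ∑ i, y i α ^ 2)
      {y | (∀ i, ∑ α, y i α ^ 2 = ∑ α, z i α ^ 2) ∧ ∀ α, sLin n d α y = sLin n d α z} z) :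
    ∃ (lam : Fin n → ℝ) (mu : Fin d → ℝ) (ν : ℝ), ¬(lam = 0 ∧ mu = 0 ∧ ν = 0) ∧
      ∀ i α, (lam i - ν * w α) * z i α = mu α := by
  classical
  let pr : Fin n → Fin d → (Fin n → Fin d → ℝ) →L[ℝ] ℝ := fun i α =>
    (ContinuousLinearMap.proj (R := ℝ) (φ := fun _ : Fin d => ℝ) α).comp
      (ContinuousLinearMap.proj (R := ℝ) (φ := fun _ : Fin n => Fin d → ℝ) i)
  have hpr : ∀ i α, HasStrictFDerivAt (fun y : Fin n → Fin d → ℝ => y i α) (pr i α) z :=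
    fun i α => (pr i α).hasStrictFDerivAt
  let f : Fin n ⊕ Fin d → (Fin n → Fin d → ℝ) → ℝ :=
    Sum.elim (fun i y => ∑ α, y i α ^ 2) (fun α y => sLin n d α y)
  have hf : ∀ j, HasStrictFDerivAt (f j) (Sum.elim (fun i => ∑ α, (2 * z i α) • pr i α)
      (fun α => ∑ i, pr i α) j) z := by
    rintro (i | α)
    · exact HasStrictFDerivAt.fun_sum fun α _ => by simpa using (hpr i α).pow 2
    · exact HasStrictFDerivAt.fun_sum (u := univ) fun i _ => hpr i α
  have hφ : HasStrictFDerivAt (fun y => ∑ α, w α * ∑ i, y i α ^ 2)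
      (∑ α, w α • ∑ i, (2 * z i α) • pr i α) z :=
    HasStrictFDerivAt.fun_sum fun α _ => (HasStrictFDerivAt.fun_sum fun i _ => by
      simpa using (hpr i α).pow 2).const_mul (w α)
  have hset : {y | ∀ j, f j y = f j z} =
      {y | (∀ i, ∑ α, y i α ^ 2 = ∑ α, z i α ^ 2) ∧ ∀ α, sLin n d α y = sLin n d α z} := by
    ext y; simp [f, Sum.forall]
  obtain ⟨Λ, Λ₀, hΛ, hsum⟩ := (hset ▸ hz).exists_multipliers_of_hasStrictFDerivAt hf hφ
  refine ⟨fun i => Λ (.inl i), fun α => -Λ (.inr α) / 2, -Λ₀, ?_, fun i α => ?_⟩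
  · rintro ⟨hlam, hmu, hν⟩
    refine hΛ (Prod.ext (funext ?_) (neg_eq_zero.1 hν))
    rintro (i | α)
    · exact congrFun hlam i
    · simpa using congrFun hmu α
  · have hcoord := congrArg (fun L => L (Pi.single i (Pi.single α 1))) hsum
    simp only [Fintype.sum_sum_type, Sum.elim_inl, Sum.elim_inr, add_apply, _root_.sum_apply,
      smul_apply, ContinuousLinearMap.comp_apply, ContinuousLinearMap.proj_apply, Pi.single_apply,
      ite_apply, Pi.zero_apply, smul_eq_mul, mul_ite, mul_one, mul_zero, sum_ite_irrel,
      sum_ite_eq', mem_univ, ↓reduceIte, sum_const_zero, zero_apply, pr] at hcoord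
    linear_combination hcoord / 2

theorem sQuad_eq (α : Fin d) (x : Fin n → Fin d → ℝ) :
    sQuad n d α x = sLin n d α x ^ 2 - ∑ i, x i α ^ 2 := by
  have hdiag : ∀ i j, (if i = j then 0 else x i α * x j α)
      = x i α * x j α - if i = j then x i α * x j α else 0 := fun i j => by
    split_ifs <;> ring
  simp only [sQuad, sLin, hdiag, sum_sub_distrib, sum_ite_eq, mem_univ, if_true, sq, sum_mul_sum]

theorem Qpoly_eq (A0 : ℝ) (A B : Fin d → ℝ) (x : Fin n → Fin d → ℝ) :
    Qpoly n d A0 A B x = A0 + ∑ α, (A α * sLin n d α x + B α * sLin n d α x ^ 2)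
      - ∑ α, B α * ∑ i, x i α ^ 2 := by
  simp only [Qpoly, sQuad_eq, mul_sub, sum_sub_distrib, sum_add_distrib]
  ring

theorem Qpoly_add_smul (A0 t : ℝ) (A B E : Fin d → ℝ) (x : Fin n → Fin d → ℝ) :
    Qpoly n d A0 A (B + t • E) x = Qpoly n d A0 A B x + t * ∑ α, E α * sQuad n d α x := by
  simp only [Qpoly, Pi.add_apply, Pi.smul_apply, smul_eq_mul, add_mul, sum_add_distrib, mul_sum,
    mul_assoc]
  ring

theorem continuous_sQuad (α : Fin d) : Continuous (sQuad n d α) := by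
  rw [funext (sQuad_eq α)]
  unfold sLin
  fun_prop

def unitTuples (n d : ℕ) : Set (Fin n → Fin d → ℝ) := {x | ∀ i, ∑ α, x i α ^ 2 = 1}

theorem abs_le_one_of_sum_sq_eq_one {ι : Type*} [Fintype ι] {u : ι → ℝ}
    (hu : ∑ α, u α ^ 2 = 1) (α : ι) : |u α| ≤ 1 :=
  sq_le_one_iff_abs_le_one _ |>.1 (hu ▸ single_le_sum (fun β _ => sq_nonneg (u β)) (mem_univ α))

theorem isCompact_unitTuples (n d : ℕ) : IsCompact (unitTuples n d) := by
  refine Metric.isCompact_of_isClosed_isBounded ?_ ?_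
  · simp only [unitTuples, Set.ofPred_forall]
    exact isClosed_iInter fun i => isClosed_eq (by fun_prop) continuous_const
  · refine isBounded_iff_forall_norm_le.2 ⟨1, fun x hx => ?_⟩
    refine pi_norm_le_iff_of_nonneg zero_le_one |>.2 fun i => ?_
    exact pi_norm_le_iff_of_nonneg zero_le_one |>.2 fun α => abs_le_one_of_sum_sq_eq_one (hx i) α

theorem eventually_cofinite_injective_add_smul {ι : Type*} [Finite ι] (B : ι → ℝ)
    {E : ι → ℝ} (hE : Function.Injective E) :
    ∀ᶠ t : ℝ in cofinite, Function.Injective (B + t • E) := by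
  refine eventually_cofinite.2 ((Set.finite_range fun p : ι × ι =>
    (B p.2 - B p.1) / (E p.1 - E p.2)).subset fun t ht => ?_)
  obtain ⟨α, β, hαβ, hne⟩ := Function.not_injective_iff.1 ht
  refine ⟨(α, β), ?_⟩
  have : E α - E β ≠ 0 := sub_ne_zero.2 (hE.ne hne)
  simp only [Pi.add_apply, Pi.smul_apply, smul_eq_mul] at hαβ
  field_simp
  linarith

theorem exists_mem_unitTuples_ncard_range_le_Qpoly_le (A0 : ℝ) (A : Fin d → ℝ) {B : Fin d → ℝ}
    (hB : Function.Injective B) {x : Fin n → Fin d → ℝ} (hx : x ∈ unitTuples n d) :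
    ∃ y ∈ unitTuples n d,
      (Set.range y).ncard ≤ 2 * d ∧ Qpoly n d A0 A B y ≤ Qpoly n d A0 A B x := by
  set K := unitTuples n d ∩ {y | ∀ α, sLin n d α y = sLin n d α x}
  have hK : IsCompact K := (isCompact_unitTuples n d).inter_right <| by
    simp only [sLin, Set.ofPred_forall]
    exact isClosed_iInter fun α => isClosed_eq (by fun_prop) continuous_const
  obtain ⟨z, ⟨hz, hzx : ∀ α, sLin n d α z = sLin n d α x⟩, hmax⟩ :=
    hK.exists_isMaxOn ⟨x, hx, fun _ => rfl⟩ (f := fun y => ∑ α, B α * ∑ i, y i α ^ 2)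
      (by fun_prop)
  have hfiber : {y | (∀ i, ∑ α, y i α ^ 2 = ∑ α, z i α ^ 2) ∧
      ∀ α, sLin n d α y = sLin n d α z} ⊆ K :=
    fun y hy => ⟨fun i => (hy.1 i).trans (hz i), fun α => (hy.2 α).trans (hzx α)⟩
  obtain ⟨lam, mu, ν, hne, hstat⟩ :=
    exists_lagrange_multipliers B (hmax.on_subset hfiber).localize.isExtr
  refine ⟨z, hz, ncard_range_le_of_lagrange hB hz hne hstat, ?_⟩
  have hle := isMaxOn_iff.1 hmax x ⟨hx, fun _ => rfl⟩
  simp only [Qpoly_eq, hzx]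
  linarith

end Extremal

theorem stmt_0_general (n d : ℕ)
    (A0 : ℝ) (A B : Fin d → ℝ) :
    (∀ x : Fin n → Fin d → ℝ, (∀ i, ∑ α, (x i α) ^ 2 = 1) →
      0 ≤ Qpoly n d A0 A B x) ↔
    (∀ x : Fin n → Fin d → ℝ, (∀ i, ∑ α, (x i α) ^ 2 = 1) →
      (Set.range x).ncard ≤ 2 * d → 0 ≤ Qpoly n d A0 A B x) := by
  refine ⟨fun h x hx _ => h x hx, fun h x hx => ?_⟩
  set E : Fin d → ℝ := fun α => α
  have hE : Function.Injective E := fun α β h => Fin.ext (Nat.cast_injective h)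
  obtain ⟨K, hK⟩ := (isCompact_unitTuples n d).exists_bound_of_continuousOn
    (f := fun y => ∑ α, E α * sQuad n d α y)
    (continuous_finsetSum _ fun α _ => continuous_const.mul (continuous_sQuad α)).continuousOn
  have hev : ∀ᶠ t in 𝓝[>] 0, 0 ≤ Qpoly n d A0 A B x + t * (2 * K) := by
    filter_upwards [nhdsGT_le_nhdsNE 0 (nhdsNE_le_cofinite 0
      (eventually_cofinite_injective_add_smul B hE)), self_mem_nhdsWithin] with t hinj ht
    obtain ⟨y, hy, hcard, hle⟩ := exists_mem_unitTuples_ncard_range_le_Qpoly_le A0 A hinj hx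
    rw [Qpoly_add_smul, Qpoly_add_smul] at hle
    have hRx := mul_le_mul_of_nonneg_left (abs_le.1 (hK x hx)).2 ht.le
    have hRy := mul_le_mul_of_nonneg_left (abs_le.1 (hK y hy)).1 ht.le
    linarith [h y hy hcard]
  refine ge_of_tendsto ?_ hev
  exact (Continuous.tendsto' (by fun_prop) 0 _ (by simp)).mono_left nhdsWithin_le_nhds

theorem stmt_0 (n d : ℕ) (hn : 1 ≤ n) (hd : 1 ≤ d)
    (A0 : ℝ) (A B : Fin d → ℝ) :
    (∀ x : Fin n → Fin d → ℝ, (∀ i, ∑ α, (x i α) ^ 2 = 1) →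
      0 ≤ Qpoly n d A0 A B x) ↔
    (∀ x : Fin n → Fin d → ℝ, (∀ i, ∑ α, (x i α) ^ 2 = 1) →
      (Set.range x).ncard ≤ 2 * d → 0 ≤ Qpoly n d A0 A B x) :=
  stmt_0_general n d A0 A B
end

section
/- Let n ≥ 1 and d ≥ 1 be integers and let Q(x) = A_0 + Σ_{α=1}^d A_α s_α(x) + Σ_{α=1}^d A_{αα} s_{αα}(x). Then Q(x) ≥ 0 for all x ∈ K_n^d (the product of n closed unit balls in ℝ^d) if and only if Q(x) ≥ 0 for all x ∈ (S^{d−1})^n (the product of n unit spheres). -/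
open scoped BigOperators

/-!
`Qpoly` is affine in each block `x i` separately: writing `s_{αα} = s_α² - ∑ᵢ ξ_{i,α}²`, the
terms quadratic in `x i` cancel. An affine function on the unit ball is minimised on the unit
sphere (Cauchy–Schwarz), so the blocks of any point of `K_n^d` can be pushed to the sphere one at
a time without increasing `Qpoly`.
-/

open Finset Function

lemma sum_comp_update {ι β M : Type*} [Fintype ι] [DecidableEq ι] [AddCommMonoid M]
    (g : β → M) (x : ι → β) (i : ι) (v : β) :
    ∑ j, g (update x i v j) = g v + ∑ j ∈ univ.erase i, g (x j) := by
  have hcomp : (fun j => g (update x i v j)) = update (g ∘ x) i (g v) := comp_update g x i v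
  rw [hcomp, sum_update_of_mem (mem_univ i), sdiff_singleton_eq_erase, comp_def]

lemma sQuad_eq_sq_sub (n d : ℕ) (α : Fin d) (x : Fin n → Fin d → ℝ) :
    sQuad n d α x = sLin n d α x ^ 2 - ∑ i, x i α ^ 2 := by
  have off_diag (i j : Fin n) : (if i = j then 0 else x i α * x j α) =
      x i α * x j α - if i = j then x i α * x j α else 0 := by
    split_ifs with h <;> simp [h]
  simp only [sQuad, sLin, off_diag, sum_sub_distrib, sum_ite_eq, mem_univ, if_true, sq,
    sum_mul_sum]

lemma exists_Qpoly_update_eq_add_sum_mul (n d : ℕ) (A0 : ℝ) (A B : Fin d → ℝ)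
    (x : Fin n → Fin d → ℝ) (i : Fin n) :
    ∃ (c : ℝ) (w : Fin d → ℝ), ∀ v, Qpoly n d A0 A B (update x i v) = c + ∑ α, w α * v α := by
  set L : Fin d → ℝ := fun α => ∑ j ∈ univ.erase i, x j α
  set S : Fin d → ℝ := fun α => ∑ j ∈ univ.erase i, x j α ^ 2
  refine ⟨A0 + ∑ α, A α * L α + ∑ α, B α * (L α ^ 2 - S α),
    fun α => A α + 2 * B α * L α, fun v => ?_⟩
  have hL (α : Fin d) : sLin n d α (update x i v) = v α + L α :=
    sum_comp_update (fun y : Fin d → ℝ => y α) x i v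
  have hS (α : Fin d) : ∑ j, update x i v j α ^ 2 = v α ^ 2 + S α :=
    sum_comp_update (fun y : Fin d → ℝ => y α ^ 2) x i v
  simp only [Qpoly, sQuad_eq_sq_sub, hL, hS, add_assoc, ← sum_add_distrib]
  congr 1
  exact sum_congr rfl fun α _ => by ring

lemma abs_sum_mul_le_sqrt {ι : Type*} [Fintype ι] (w v : ι → ℝ) (hv : ∑ i, v i ^ 2 ≤ 1) :
    |∑ i, w i * v i| ≤ √(∑ i, w i ^ 2) :=
  Real.abs_le_sqrt <| (sum_mul_sq_le_sq_mul_sq _ w v).trans <|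
    mul_le_of_le_one_right (sum_nonneg fun i _ => sq_nonneg (w i)) hv

lemma exists_sum_sq_eq_one_sum_mul_le {ι : Type*} [Fintype ι] [Nonempty ι] (w v : ι → ℝ)
    (hv : ∑ i, v i ^ 2 ≤ 1) :
    ∃ u : ι → ℝ, ∑ i, u i ^ 2 = 1 ∧ ∑ i, w i * u i ≤ ∑ i, w i * v i := by
  set N := √(∑ i, w i ^ 2)
  have hv_ge : -N ≤ ∑ i, w i * v i := neg_le_of_abs_le (abs_sum_mul_le_sqrt w v hv)
  rcases (Real.sqrt_nonneg _ : 0 ≤ N).eq_or_lt with hN | hN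
  · classical
    obtain ⟨i₀⟩ := ‹Nonempty ι›
    set u : ι → ℝ := Pi.single i₀ 1
    have hu : ∑ i, u i ^ 2 = 1 := by simp [u, Pi.single_apply, ite_pow]
    refine ⟨u, hu, ?_⟩
    have := le_of_abs_le (abs_sum_mul_le_sqrt w _ hu.le)
    linarith
  · have hN2 : N ^ 2 = ∑ i, w i ^ 2 := Real.sq_sqrt (sum_nonneg fun i _ => sq_nonneg (w i))
    refine ⟨fun i => -(w i / N), ?_, ?_⟩
    · simp only [neg_sq, div_pow, ← sum_div, ← hN2]
      exact div_self (by positivity)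
    · convert hv_ge using 1
      simp only [mul_neg, ← mul_div_assoc, ← sq, ← sum_div, sum_neg_distrib, ← hN2]
      field_simp

lemma exists_sum_sq_eq_one_Qpoly_update_le {n d : ℕ} [Nonempty (Fin d)] (A0 : ℝ)
    (A B : Fin d → ℝ) (x : Fin n → Fin d → ℝ) (i : Fin n) (hxi : ∑ α, x i α ^ 2 ≤ 1) :
    ∃ u : Fin d → ℝ, ∑ α, u α ^ 2 = 1 ∧ Qpoly n d A0 A B (update x i u) ≤ Qpoly n d A0 A B x := by
  obtain ⟨c, w, hQ⟩ := exists_Qpoly_update_eq_add_sum_mul n d A0 A B x i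
  obtain ⟨u, hu, hwu⟩ := exists_sum_sq_eq_one_sum_mul_le w (x i) hxi
  refine ⟨u, hu, ?_⟩
  rw [hQ, ← update_eq_self i x, hQ]
  exact add_le_add_right hwu c

lemma exists_forall_mem_le_of_update_le {ι X β : Type*} [Fintype ι] [DecidableEq ι] [Preorder β]
    {K S : Set X} (hSK : S ⊆ K) (F : (ι → X) → β)
    (hF : ∀ x, (∀ j, x j ∈ K) → ∀ i, ∃ u ∈ S, F (update x i u) ≤ F x)
    (x : ι → X) (hx : ∀ j, x j ∈ K) :
    ∃ y, (∀ j, y j ∈ S) ∧ F y ≤ F x := by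
  suffices h : ∀ s : Finset ι, ∃ y, (∀ j, y j ∈ K) ∧ (∀ j ∈ s, y j ∈ S) ∧ F y ≤ F x by
    obtain ⟨y, -, hyS, hyx⟩ := h univ
    exact ⟨y, fun j => hyS j (mem_univ j), hyx⟩
  intro s
  induction s using Finset.induction_on with
  | empty => exact ⟨x, hx, by simp, le_rfl⟩
  | insert i s _ ih =>
    obtain ⟨y, hyK, hyS, hyx⟩ := ih
    obtain ⟨u, huS, hu⟩ := hF y hyK i
    refine ⟨update y i u, fun j => ?_, fun j hj => ?_, hu.trans hyx⟩
    · rcases eq_or_ne j i with rfl | hji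
      · simpa using hSK huS
      · simpa [hji] using hyK j
    · rcases eq_or_ne j i with rfl | hji
      · simpa using huS
      · simpa [hji] using hyS j ((mem_insert.mp hj).resolve_left hji)

theorem stmt_1_general (n d : ℕ) (hd : 1 ≤ d)
    (A0 : ℝ) (A B : Fin d → ℝ) :
    (∀ x : Fin n → Fin d → ℝ, (∀ i, ∑ α, (x i α) ^ 2 ≤ 1) →
      0 ≤ Qpoly n d A0 A B x) ↔
    (∀ x : Fin n → Fin d → ℝ, (∀ i, ∑ α, (x i α) ^ 2 = 1) →
      0 ≤ Qpoly n d A0 A B x) := by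
  have : Nonempty (Fin d) := ⟨⟨0, hd⟩⟩
  refine ⟨fun h x hx => h x fun i => (hx i).le, fun h x hx => ?_⟩
  obtain ⟨y, hy, hyx⟩ := exists_forall_mem_le_of_update_le
    (K := {v : Fin d → ℝ | ∑ α, v α ^ 2 ≤ 1}) (S := {v | ∑ α, v α ^ 2 = 1})
    (fun v hv => le_of_eq hv) (Qpoly n d A0 A B)
    (fun x hx i => exists_sum_sq_eq_one_Qpoly_update_le A0 A B x i (hx i)) x hx
  exact (h y hy).trans hyx

theorem stmt_1 (n d : ℕ) (hn : 1 ≤ n) (hd : 1 ≤ d)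
    (A0 : ℝ) (A B : Fin d → ℝ) :
    (∀ x : Fin n → Fin d → ℝ, (∀ i, ∑ α, (x i α) ^ 2 ≤ 1) →
      0 ≤ Qpoly n d A0 A B x) ↔
    (∀ x : Fin n → Fin d → ℝ, (∀ i, ∑ α, (x i α) ^ 2 = 1) →
      0 ≤ Qpoly n d A0 A B x) :=
  stmt_1_general n d hd A0 A B
end

section
/- Let n ≥ 1 and let Q(x) = A_0 + A_1 s_1(x) + A_{11} s_{11}(x) be a polynomial on [−1,1]^n. Then Q(x) ≥ 0 for all x ∈ [−1,1]^n if and only if A_0 + A_1(n − 2k) + A_{11}((n − 2k)² − n) ≥ 0 for every integer k with 0 ≤ k ≤ n. -/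
open scoped BigOperators

/-- `s1 x = ∑ i, x_i` -/
noncomputable def s1 (n : ℕ) (x : Fin n → ℝ) : ℝ := ∑ i, x i

/-- `s11 x = ∑_{i ≠ j} x_i x_j` (sum over ordered pairs). -/
noncomputable def s11 (n : ℕ) (x : Fin n → ℝ) : ℝ :=
  ∑ i, ∑ j, if i = j then 0 else x i * x j

lemma s11_eq (n : ℕ) (x : Fin n → ℝ) :
    s11 n x = (s1 n x) ^ 2 - ∑ i, (x i) ^ 2 := by
  unfold s1 s11
  have h1 : ∀ i : Fin n, (∑ j, if i = j then (0:ℝ) else x i * x j)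
      = x i * (∑ j, x j) - (x i) ^ 2 := by
    intro i
    have : (∑ j, if i = j then (0:ℝ) else x i * x j)
        = ∑ j, (x i * x j - if i = j then x i * x j else 0) := by
      apply Finset.sum_congr rfl
      intro j _
      by_cases h : i = j <;> simp [h]
    rw [this, Finset.sum_sub_distrib, Finset.sum_ite_eq, ← Finset.mul_sum]
    simp [sq]
  calc (∑ i, ∑ j, if i = j then (0:ℝ) else x i * x j)
      = ∑ i, (x i * (∑ j, x j) - (x i) ^ 2) := by
        exact Finset.sum_congr rfl fun i _ => h1 i
    _ = (∑ i, x i) ^ 2 - ∑ i, (x i) ^ 2 := by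
        rw [Finset.sum_sub_distrib, ← Finset.sum_mul, sq]

lemma s1_update (n : ℕ) (x : Fin n → ℝ) (i : Fin n) (t : ℝ) :
    s1 n (Function.update x i t) = s1 n x - x i + t := by
  unfold s1
  rw [Finset.sum_update_of_mem (Finset.mem_univ i)]
  have : ∑ j ∈ Finset.univ \ {i}, x j = (∑ j, x j) - x i := by
    rw [Finset.sum_sdiff_eq_sub (by simp), Finset.sum_singleton]
  rw [this]; ring

lemma sq_sum_update (n : ℕ) (x : Fin n → ℝ) (i : Fin n) (t : ℝ) :
    (∑ j, (Function.update x i t j) ^ 2) = (∑ j, (x j) ^ 2) - (x i) ^ 2 + t ^ 2 := by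
  have h : ∀ j, (Function.update x i t j) ^ 2
      = Function.update (fun j => (x j) ^ 2) i (t ^ 2) j := by
    intro j
    exact (Function.apply_update (fun _ y => y ^ 2) x i t j)
  calc (∑ j, (Function.update x i t j) ^ 2)
      = ∑ j, Function.update (fun j => (x j) ^ 2) i (t ^ 2) j :=
        Finset.sum_congr rfl fun j _ => h j
    _ = (∑ j, (x j) ^ 2) - (x i) ^ 2 + t ^ 2 := by
        rw [Finset.sum_update_of_mem (Finset.mem_univ i)]
        have : ∑ j ∈ Finset.univ \ {i}, (x j) ^ 2 = (∑ j, (x j) ^ 2) - (x i) ^ 2 := by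
          rw [Finset.sum_sdiff_eq_sub (by simp), Finset.sum_singleton]
        rw [this]; ring

/-- the quadratic is affine in each coordinate -/
lemma Q_update (n : ℕ) (A0 A1 A11 : ℝ) (x : Fin n → ℝ) (i : Fin n) (t : ℝ) :
    A0 + A1 * s1 n (Function.update x i t) + A11 * s11 n (Function.update x i t)
      = (A0 + A1 * (s1 n x - x i)
          + A11 * ((s1 n x - x i) ^ 2 - ((∑ j, (x j) ^ 2) - (x i) ^ 2)))
        + (A1 + 2 * A11 * (s1 n x - x i)) * t := by
  rw [s11_eq, s1_update, sq_sum_update]; ring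

lemma step_lemma (n : ℕ) (A0 A1 A11 : ℝ) (x : Fin n → ℝ) (i : Fin n)
    (hx : x i ∈ Set.Icc (-1 : ℝ) 1) :
    ∃ t : ℝ, (t = -1 ∨ t = 1) ∧
      A0 + A1 * s1 n (Function.update x i t) + A11 * s11 n (Function.update x i t)
        ≤ A0 + A1 * s1 n x + A11 * s11 n x := by
  obtain ⟨h1, h2⟩ := hx
  set c := A0 + A1 * (s1 n x - x i)
      + A11 * ((s1 n x - x i) ^ 2 - ((∑ j, (x j) ^ 2) - (x i) ^ 2)) with hc
  set d := A1 + 2 * A11 * (s1 n x - x i) with hd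
  have hx_eq : A0 + A1 * s1 n x + A11 * s11 n x = c + d * x i := by
    have := Q_update n A0 A1 A11 x i (x i)
    rwa [Function.update_eq_self] at this
  rcases le_or_gt 0 d with hdpos | hdneg
  · refine ⟨-1, Or.inl rfl, ?_⟩
    rw [Q_update, hx_eq, ← hc, ← hd]
    nlinarith
  · refine ⟨1, Or.inr rfl, ?_⟩
    rw [Q_update, hx_eq, ← hc, ← hd]
    nlinarith

lemma to_vertex (n : ℕ) (A0 A1 A11 : ℝ) (S : Finset (Fin n)) :
    ∀ x : Fin n → ℝ, (∀ i, x i ∈ Set.Icc (-1 : ℝ) 1) →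
      ∃ y : Fin n → ℝ, (∀ i, y i ∈ Set.Icc (-1 : ℝ) 1) ∧
        (∀ i ∈ S, y i = -1 ∨ y i = 1) ∧
        A0 + A1 * s1 n y + A11 * s11 n y ≤ A0 + A1 * s1 n x + A11 * s11 n x := by
  classical
  induction S using Finset.induction_on with
  | empty =>
      intro x hx
      exact ⟨x, hx, by simp, le_refl _⟩
  | @insert i S hiS ih =>
      intro x hx
      obtain ⟨y, hy, hyS, hle⟩ := ih x hx
      obtain ⟨t, ht, hle2⟩ := step_lemma n A0 A1 A11 y i (hy i)
      refine ⟨Function.update y i t, ?_, ?_, le_trans hle2 hle⟩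
      · intro j
        by_cases hj : j = i
        · subst hj
          rw [Function.update_self]
          rcases ht with rfl | rfl <;> constructor <;> norm_num
        · rw [Function.update_of_ne hj]; exact hy j
      · intro j hj
        by_cases hji : j = i
        · subst hji
          rw [Function.update_self]; exact ht
        · rw [Function.update_of_ne hji]
          exact hyS j (Finset.mem_of_mem_insert_of_ne hj hji)

lemma card_filter_lt (n k : ℕ) (hk : k ≤ n) :
    (Finset.univ.filter fun i : Fin n => (i : ℕ) < k).card = k := by
  rcases lt_or_eq_of_le hk with h | h
  · have : (Finset.univ.filter fun i : Fin n => (i : ℕ) < k) = Finset.Iio ⟨k, h⟩ := by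
      ext j
      simp [Fin.lt_def]
    rw [this, Fin.card_Iio]
  · have : (Finset.univ.filter fun i : Fin n => (i : ℕ) < k) = Finset.univ := by
      ext j
      simp only [Finset.mem_filter, Finset.mem_univ, true_and, iff_true]
      exact lt_of_lt_of_le j.isLt h.ge
    rw [this, Finset.card_univ, Fintype.card_fin, h]

theorem stmt_2 (n : ℕ) (hn : 1 ≤ n) (A0 A1 A11 : ℝ) :
    (∀ x : Fin n → ℝ, (∀ i, x i ∈ Set.Icc (-1 : ℝ) 1) →
      0 ≤ A0 + A1 * s1 n x + A11 * s11 n x) ↔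
    (∀ k : ℕ, k ≤ n →
      0 ≤ A0 + A1 * ((n : ℝ) - 2 * k) + A11 * (((n : ℝ) - 2 * k) ^ 2 - n)) := by
  classical
  constructor
  · -- forward: plug in the vertex with k coordinates equal to -1
    intro h k hk
    set x : Fin n → ℝ := fun i => if (i : ℕ) < k then -1 else 1 with hxdef
    have hx : ∀ i, x i ∈ Set.Icc (-1 : ℝ) 1 := by
      intro i
      by_cases hi : (i : ℕ) < k <;> simp [hxdef, hi]
    have hs1 : s1 n x = (n : ℝ) - 2 * k := by
      unfold s1
      rw [← Finset.sum_filter_add_sum_filter_not Finset.univ (fun i : Fin n => (i : ℕ) < k)]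
      have hv1 : ∀ i ∈ Finset.univ.filter (fun i : Fin n => (i : ℕ) < k), x i = -1 := by
        intro i hi
        simp only [Finset.mem_filter] at hi
        simp [hxdef, hi.2]
      have hv2 : ∀ i ∈ Finset.univ.filter (fun i : Fin n => ¬ (i : ℕ) < k), x i = 1 := by
        intro i hi
        simp only [Finset.mem_filter] at hi
        simp [hxdef, hi.2]
      have hc2 : (Finset.univ.filter (fun i : Fin n => ¬ (i : ℕ) < k)).card = n - k := by
        rw [Finset.filter_not, Finset.card_sdiff_of_subset (Finset.filter_subset _ _),
          card_filter_lt n k hk, Finset.card_univ, Fintype.card_fin]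
      rw [Finset.sum_congr rfl hv1, Finset.sum_congr rfl hv2, Finset.sum_const,
        Finset.sum_const, card_filter_lt n k hk, hc2, nsmul_eq_mul, nsmul_eq_mul]
      push_cast [hk]
      ring
    have hsq : (∑ i, (x i) ^ 2) = (n : ℝ) := by
      have : ∀ i : Fin n, (x i) ^ 2 = 1 := by
        intro i
        by_cases hi : (i : ℕ) < k <;> simp [hxdef, hi]
      rw [Finset.sum_congr rfl (fun i _ => this i)]
      simp
    have := h x hx
    rwa [s11_eq, hs1, hsq] at this
  · -- backward: reduce to vertices
    intro h x hx
    obtain ⟨y, hy, hyv, hle⟩ := to_vertex n A0 A1 A11 Finset.univ x hx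
    have hyv' : ∀ i, y i = -1 ∨ y i = 1 := fun i => hyv i (Finset.mem_univ i)
    set T := Finset.univ.filter (fun i : Fin n => y i = -1) with hT
    set k := T.card with hkdef
    have hk : k ≤ n := by
      rw [hkdef]
      calc T.card ≤ Finset.univ.card := Finset.card_le_card (Finset.filter_subset _ _)
        _ = n := by simp
    have hs1 : s1 n y = (n : ℝ) - 2 * k := by
      unfold s1
      rw [← Finset.sum_filter_add_sum_filter_not Finset.univ (fun i : Fin n => y i = -1)]
      have hv1 : ∀ i ∈ Finset.univ.filter (fun i : Fin n => y i = -1), y i = -1 := by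
        intro i hi
        simp only [Finset.mem_filter] at hi
        exact hi.2
      have hv2 : ∀ i ∈ Finset.univ.filter (fun i : Fin n => ¬ y i = -1), y i = 1 := by
        intro i hi
        simp only [Finset.mem_filter] at hi
        rcases hyv' i with h1 | h1
        · exact absurd h1 hi.2
        · exact h1
      have hc2 : (Finset.univ.filter (fun i : Fin n => ¬ y i = -1)).card = n - k := by
        rw [Finset.filter_not, Finset.card_sdiff_of_subset (Finset.filter_subset _ _),
          Finset.card_univ, Fintype.card_fin, ← hT, ← hkdef]
      have hc1 : (Finset.univ.filter (fun i : Fin n => y i = -1)).card = k := by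
        rw [← hT, ← hkdef]
      rw [Finset.sum_congr rfl hv1, Finset.sum_congr rfl hv2, Finset.sum_const,
        Finset.sum_const, hc1, hc2, nsmul_eq_mul, nsmul_eq_mul]
      push_cast [hk]
      ring
    have hsq : (∑ i, (y i) ^ 2) = (n : ℝ) := by
      have : ∀ i : Fin n, (y i) ^ 2 = 1 := by
        intro i
        rcases hyv' i with h1 | h1 <;> rw [h1] <;> norm_num
      rw [Finset.sum_congr rfl (fun i _ => this i)]
      simp
    have hQy : A0 + A1 * s1 n y + A11 * s11 n y
        = A0 + A1 * ((n : ℝ) - 2 * k) + A11 * (((n : ℝ) - 2 * k) ^ 2 - n) := by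
      rw [s11_eq, hs1, hsq]
    have := h k hk
    linarith [hle, hQy ▸ this]
end

section
/- Let n ≥ 1 and let Q(x) = A_0 + A_1 s_1(x) + A_{11} s_{11}(x). Then Q(x) ≥ 0 for all x ∈ [−1,1]^n if and only if Q(x) ≥ 0 for all x ∈ {−1, +1}^n. -/
open scoped BigOperators

theorem stmt_3 (n : ℕ) (hn : 1 ≤ n) (A0 A1 A11 : ℝ) :
    (∀ x : Fin n → ℝ, (∀ i, x i ∈ Set.Icc (-1 : ℝ) 1) →
      0 ≤ A0 + A1 * s1 n x + A11 * s11 n x) ↔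
    (∀ x : Fin n → ℝ, (∀ i, x i = -1 ∨ x i = 1) →
      0 ≤ A0 + A1 * s1 n x + A11 * s11 n x) := by
  constructor
  · intro h x hx
    refine h x (fun i => ?_)
    rcases hx i with h1 | h1 <;> rw [h1] <;> constructor <;> norm_num
  · intro hV
    have main : ∀ S : Finset (Fin n), ∀ x : Fin n → ℝ,
        (∀ i, x i ∈ Set.Icc (-1 : ℝ) 1) →
        (∀ i, i ∉ S → x i = -1 ∨ x i = 1) →
        0 ≤ A0 + A1 * s1 n x + A11 * s11 n x := by
      intro S
      induction S using Finset.induction_on with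
      | empty =>
        intro x hx hv
        exact hV x (fun i => hv i (Finset.notMem_empty i))
      | @insert a s ha IH =>
        intro x hx hxs
        set σ : ℝ := ∑ i ∈ Finset.univ \ {a}, x i with hσ
        set q : ℝ := ∑ i ∈ Finset.univ \ {a}, (x i) ^ 2 with hq
        have hs1 : ∀ t : ℝ, s1 n (Function.update x a t) = t + σ := by
          intro t
          unfold s1
          rw [Finset.sum_update_of_mem (Finset.mem_univ a)]
        have hsq : ∀ t : ℝ, (∑ i, (Function.update x a t i) ^ 2) = t ^ 2 + q := by
          intro t
          have hp : ∀ i : Fin n, (Function.update x a t i) ^ 2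
              = Function.update (fun i => (x i) ^ 2) a (t ^ 2) i := by
            intro i
            by_cases h : i = a
            · subst h; simp
            · simp [Function.update_of_ne h]
          simp_rw [hp]
          rw [Finset.sum_update_of_mem (Finset.mem_univ a)]
        have key : ∀ t : ℝ,
            A0 + A1 * s1 n (Function.update x a t)
              + A11 * s11 n (Function.update x a t)
            = A0 + A1 * (t + σ) + A11 * ((t + σ) ^ 2 - (t ^ 2 + q)) := by
          intro t
          rw [s11_eq, hs1, hsq]
        have hcube : ∀ t : ℝ, t ∈ Set.Icc (-1 : ℝ) 1 →
            ∀ i, Function.update x a t i ∈ Set.Icc (-1 : ℝ) 1 := by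
          intro t ht i
          by_cases h : i = a
          · subst h; simp [ht]
          · simp [Function.update_of_ne h]; exact hx i
        have hvert : ∀ t : ℝ, (t = -1 ∨ t = 1) →
            ∀ i, i ∉ s → Function.update x a t i = -1 ∨ Function.update x a t i = 1 := by
          intro t ht i hi
          by_cases h : i = a
          · subst h; simpa using ht
          · rw [Function.update_of_ne h]
            exact hxs i (by simp [h, hi])
        have h1 := IH (Function.update x a 1)
          (hcube 1 (by constructor <;> norm_num)) (hvert 1 (Or.inr rfl))
        have hm := IH (Function.update x a (-1))
          (hcube (-1) (by constructor <;> norm_num)) (hvert (-1) (Or.inl rfl))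
        rw [key 1] at h1
        rw [key (-1)] at hm
        have hxa := hx a
        have hself : Function.update x a (x a) = x := Function.update_eq_self a x
        have := key (x a)
        rw [hself] at this
        rw [this]
        obtain ⟨hl, hr⟩ := hxa
        nlinarith [h1, hm, mul_nonneg (mul_nonneg (by linarith : (0:ℝ) ≤ 1 - x a) (by linarith : (0:ℝ) ≤ 1 + x a)) (sq_nonneg (1:ℝ))]
    intro x hx
    exact main Finset.univ x hx (fun i hi => absurd (Finset.mem_univ i) hi)
end

section
/- Let n ≥ 1 and let A_0, A_1, A_{11} ∈ ℝ. If the univariate quadratic P_Q(X) = (A_0 − n A_{11}) + √n A_1 X + n A_{11} X² satisfies P_Q(X) ≥ 0 for all X ∈ [−√n, √n], then Q(x) = A_0 + A_1 s_1(x) + A_{11} s_{11}(x) ≥ 0 for all x ∈ [−1,1]^n. -/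
open scoped BigOperators

theorem stmt_5 (n : ℕ) (hn : 1 ≤ n) (A0 A1 A11 : ℝ)
    (hP : ∀ X : ℝ, X ∈ Set.Icc (-Real.sqrt n) (Real.sqrt n) →
      0 ≤ (A0 - n * A11) + Real.sqrt n * A1 * X + n * A11 * X ^ 2) :
    ∀ x : Fin n → ℝ, (∀ i, x i ∈ Set.Icc (-1 : ℝ) 1) →
      0 ≤ A0 + A1 * s1 n x + A11 * s11 n x := by
  intro x hx
  have hn1 : (1:ℝ) ≤ (n:ℝ) := by exact_mod_cast hn
  have hnpos : (0:ℝ) < (n:ℝ) := by linarith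
  have hsq : Real.sqrt n ^ 2 = (n:ℝ) := Real.sq_sqrt hnpos.le
  have hsqpos : 0 < Real.sqrt n := Real.sqrt_pos.2 hnpos
  set s : ℝ := s1 n x with hs
  set s2 : ℝ := ∑ i, x i ^ 2 with hs2def
  -- s11 = s^2 - s2
  have hkey : s11 n x = s ^ 2 - s2 := by
    have h1 : ∀ i : Fin n, (∑ j, if i = j then (0:ℝ) else x i * x j)
        = x i * s - x i ^ 2 := by
      intro i
      have he : (∑ j, if i = j then (0:ℝ) else x i * x j)
          = ∑ j, (x i * x j - if i = j then x i * x j else 0) := by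
        apply Finset.sum_congr rfl
        intro j _
        by_cases h : i = j <;> simp [h]
      rw [he, Finset.sum_sub_distrib, Finset.sum_ite_eq, ← Finset.mul_sum]
      simp [hs, s1, sq]
    unfold s11
    rw [Finset.sum_congr rfl (fun i _ => h1 i), Finset.sum_sub_distrib,
      ← Finset.sum_mul]
    simp [hs, s1, hs2def, sq]
  -- bounds
  have hxb : ∀ i, |x i| ≤ 1 := fun i => abs_le.2 ⟨(hx i).1, (hx i).2⟩
  have habs : |s| ≤ (n:ℝ) := by
    calc |s| ≤ ∑ i, |x i| := Finset.abs_sum_le_sum_abs _ _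
    _ ≤ ∑ _i : Fin n, (1:ℝ) := Finset.sum_le_sum (fun i _ => hxb i)
    _ = (n:ℝ) := by simp
  have hsl : -(n:ℝ) ≤ s := (abs_le.1 habs).1
  have hsr : s ≤ (n:ℝ) := (abs_le.1 habs).2
  have hs2le : s2 ≤ (n:ℝ) := by
    calc s2 ≤ ∑ _i : Fin n, (1:ℝ) := by
          apply Finset.sum_le_sum
          intro i _
          nlinarith [(hx i).1, (hx i).2]
    _ = (n:ℝ) := by simp
  have hCS : s ^ 2 ≤ (n:ℝ) * s2 := by
    have := sq_sum_le_card_mul_sum_sq (s := (Finset.univ : Finset (Fin n))) (f := x)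
    simpa [hs, s1, hs2def] using this
  rw [hkey]
  -- evaluate P at s / sqrt n
  have hmem : s / Real.sqrt n ∈ Set.Icc (-Real.sqrt n) (Real.sqrt n) := by
    constructor
    · rw [neg_le, ← neg_div, div_le_iff₀ hsqpos]
      nlinarith
    · rw [div_le_iff₀ hsqpos]
      nlinarith
  have hmid := hP _ hmem
  have hmid' : 0 ≤ A0 - n * A11 + A1 * s + A11 * s ^ 2 := by
    have h1 : Real.sqrt n * A1 * (s / Real.sqrt n) = A1 * s := by
      field_simp
    have h2 : (n:ℝ) * A11 * (s / Real.sqrt n) ^ 2 = A11 * s ^ 2 := by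
      rw [div_pow]
      rw [hsq]
      field_simp
    rw [h1, h2] at hmid
    linarith
  rcases le_or_gt 0 A11 with hA | hA
  · nlinarith [mul_nonneg hA (sub_nonneg.2 hs2le)]
  · -- endpoints
    have hp := hP (Real.sqrt n) ⟨by linarith, le_refl _⟩
    have hm := hP (-Real.sqrt n) ⟨le_refl _, by linarith⟩
    have hmul : Real.sqrt n * Real.sqrt n = (n:ℝ) := Real.mul_self_sqrt hnpos.le
    have hp' : 0 ≤ A0 + (n:ℝ) * A1 + (n:ℝ) * ((n:ℝ) - 1) * A11 := by
      rw [show Real.sqrt n * A1 * Real.sqrt n = A1 * (Real.sqrt n * Real.sqrt n) by ring,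
        hmul, hsq] at hp
      nlinarith [hp]
    have hm' : 0 ≤ A0 - (n:ℝ) * A1 + (n:ℝ) * ((n:ℝ) - 1) * A11 := by
      rw [show Real.sqrt n * A1 * -Real.sqrt n = -(A1 * (Real.sqrt n * Real.sqrt n)) by ring,
        hmul, neg_sq, hsq] at hm
      nlinarith [hm]
    have hsn : s ^ 2 ≤ (n:ℝ) ^ 2 := by nlinarith
    have p1 : 0 ≤ ((n:ℝ) - s) * (A0 - (n:ℝ) * A1 + (n:ℝ) * ((n:ℝ) - 1) * A11) :=
      mul_nonneg (by linarith) hm'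
    have p2 : 0 ≤ ((n:ℝ) + s) * (A0 + (n:ℝ) * A1 + (n:ℝ) * ((n:ℝ) - 1) * A11) :=
      mul_nonneg (by linarith) hp'
    have p3 : 0 ≤ (-A11) * ((n:ℝ) * s2 - s ^ 2) :=
      mul_nonneg (by linarith) (by linarith)
    have p4 : 0 ≤ (-A11) * (((n:ℝ) - 1) * ((n:ℝ) ^ 2 - s ^ 2)) :=
      mul_nonneg (by linarith) (mul_nonneg (by linarith) (by linarith))
    have h2 : (0:ℝ) < 2 * (n:ℝ) := by linarith
    have key : 0 ≤ 2 * (n:ℝ) * (A0 + A1 * s + A11 * (s ^ 2 - s2)) := by linarith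
    exact nonneg_of_mul_nonneg_right key h2
end

section
/- Let n ≥ 2 and d ≥ 1 be integers. If Q(x) = A_0 + Σ_{α=1}^d A_α s_α(x) + Σ_{α=1}^d A_{αα} s_{αα}(x) satisfies Q(x) ≥ 0 for all x ∈ K_n^d, then A_{αα} ≤ A_0/(n − 1) for every α with 1 ≤ α ≤ d. -/
open scoped BigOperators

lemma range_neg_one_sum (n : ℕ) :
    (∑ i ∈ Finset.range n, (-1:ℝ)^i) = if Even n then 0 else 1 := by
  induction n with
  | zero => simp
  | succ k ih =>
    rcases Nat.even_or_odd k with h | h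
    · rw [Finset.sum_range_succ, ih, if_pos h,
        if_neg (by simp [Nat.even_add_one, h]), h.neg_one_pow]
      ring
    · rw [Finset.sum_range_succ, ih, if_neg (Nat.not_even_iff_odd.2 h),
        if_pos (Nat.even_add_one.2 (Nat.not_even_iff_odd.2 h)), h.neg_one_pow]
      ring

theorem stmt_7 (n d : ℕ) (hn : 2 ≤ n) (hd : 1 ≤ d)
    (A0 : ℝ) (A B : Fin d → ℝ)
    (hQ : ∀ x : Fin n → Fin d → ℝ, (∀ i, ∑ α, (x i α) ^ 2 ≤ 1) →
      0 ≤ Qpoly n d A0 A B x) :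
    ∀ α : Fin d, B α ≤ A0 / ((n : ℝ) - 1) := by
  intro α
  have hn2 : (2:ℝ) ≤ (n:ℝ) := by exact_mod_cast hn
  have hpos : (0:ℝ) < (n:ℝ) - 1 := by linarith
  set ε : Fin n → ℝ := fun i => (-1)^(i:ℕ) with hεdef
  have hε2 : ∀ i, ε i ^ 2 = 1 := by
    intro i
    rw [hεdef]
    simp only
    rw [← pow_mul, mul_comm, pow_mul]
    norm_num
  set s : ℝ := ∑ i, ε i with hsdef
  have hs2 : s ^ 2 ≤ 1 := by
    have : s = if Even n then 0 else 1 := by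
      rw [hsdef, hεdef, Fin.sum_univ_eq_sum_range (fun i => (-1:ℝ)^i)]
      exact range_neg_one_sum n
    rw [this]; split_ifs <;> norm_num
  have hA0 : 0 ≤ A0 := by
    have := hQ (fun _ _ => 0) (by intro i; simp)
    simpa [Qpoly, sLin, sQuad] using this
  have key : ∀ c : ℝ, c ^ 2 = 1 →
      0 ≤ A0 + A α * (c * s) + B α * (s ^ 2 - n) := by
    intro c hc
    set x : Fin n → Fin d → ℝ := fun i β => if β = α then c * ε i else 0 with hxdef
    have hxα : ∀ i, x i α = c * ε i := by intro i; simp [hxdef]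
    have hxβ : ∀ i (β : Fin d), β ≠ α → x i β = 0 := by
      intro i β h; simp [hxdef, h]
    have hcon : ∀ i, ∑ β, (x i β) ^ 2 ≤ 1 := by
      intro i
      have hterm : ∀ β : Fin d, (x i β) ^ 2 = if β = α then 1 else 0 := by
        intro β
        rcases eq_or_ne β α with h | h
        · rw [h, hxα i, if_pos rfl, mul_pow, hc, hε2 i]; ring
        · rw [hxβ i β h, if_neg h]; ring
      rw [Finset.sum_congr rfl (fun β _ => hterm β)]
      simp
    have hQx := hQ x hcon
    have hlin : ∀ β : Fin d, sLin n d β x = if β = α then c * s else 0 := by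
      intro β
      unfold sLin
      rcases eq_or_ne β α with h | h
      · rw [h, if_pos rfl, Finset.sum_congr rfl (fun i _ => hxα i), hsdef,
          Finset.mul_sum]
      · rw [if_neg h, Finset.sum_congr rfl (fun i _ => hxβ i β h)]
        simp
    have hquad : ∀ β : Fin d, sQuad n d β x = if β = α then s ^ 2 - n else 0 := by
      intro β
      unfold sQuad
      rcases eq_or_ne β α with h | h
      · rw [h, if_pos rfl]
        have step : ∀ i : Fin n, (∑ j, if i = j then 0 else x i α * x j α)
            = ε i * s - 1 := by
          intro i
          have h1 : ∀ j : Fin n, (if i = j then 0 else x i α * x j α)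
              = (c * ε i) * (c * ε j)
                - (if j = i then (c * ε i) * (c * ε j) else 0) := by
            intro j
            rw [hxα i, hxα j]
            rcases eq_or_ne i j with rfl | hne
            · simp
            · rw [if_neg hne, if_neg (Ne.symm hne)]; ring
          rw [Finset.sum_congr rfl (fun j _ => h1 j), Finset.sum_sub_distrib,
            Finset.sum_ite_eq' Finset.univ i (fun j => (c * ε i) * (c * ε j)),
            if_pos (Finset.mem_univ i)]
          have h2 : (∑ j, (c * ε i) * (c * ε j)) = c ^ 2 * ε i * s := by
            rw [hsdef, Finset.mul_sum]
            exact Finset.sum_congr rfl (fun j _ => by ring)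
          have h4 : (c * ε i) * (c * ε i) = 1 := by
            have h5 : (c * ε i) * (c * ε i) = c ^ 2 * ε i ^ 2 := by ring
            rw [h5, hc, hε2 i]; norm_num
          rw [h2, h4, hc]
          ring
        rw [Finset.sum_congr rfl (fun i _ => step i), Finset.sum_sub_distrib,
          ← Finset.sum_mul, ← hsdef]
        simp only [Finset.sum_const, Finset.card_univ, Fintype.card_fin,
          nsmul_eq_mul, mul_one]
        ring
      · rw [if_neg h]
        have hz : ∀ i j : Fin n, (if i = j then 0 else x i β * x j β) = 0 := by
          intro i j; rw [hxβ i β h]; split_ifs <;> ring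
        simp [hz]
    have e1 : (∑ β, A β * sLin n d β x) = A α * (c * s) := by
      simp only [hlin, mul_ite, mul_zero]
      simp
    have e2 : (∑ β, B β * sQuad n d β x) = B α * (s ^ 2 - n) := by
      simp only [hquad, mul_ite, mul_zero]
      simp
    unfold Qpoly at hQx
    rw [e1, e2] at hQx
    exact hQx
  have k1 := key 1 (by norm_num)
  have k2 := key (-1) (by norm_num)
  have hmain : B α * ((n:ℝ) - s ^ 2) ≤ A0 := by nlinarith
  by_cases hB : B α ≤ 0
  · exact le_trans hB (div_nonneg hA0 hpos.le)
  · push_neg at hB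
    rw [le_div_iff₀ hpos]
    nlinarith [mul_nonneg hB.le (by linarith : (0:ℝ) ≤ 1 - s ^ 2)]
end

section
/- Let n ≥ 2 and d ≥ 1 be integers and let A_0, A_α, A_{αα} (1 ≤ α ≤ d) be real numbers. Then P_Q(X,Y) = A_0 + √n Σ_{α=1}^d A_α X_α + (n − 1) Σ_{α=1}^d A_{αα} X_α² − n Σ_{α=1}^d A_{αα} Y_α² ≥ 0 for all X, Y ∈ ℝ^d with ‖Y‖² + ‖X‖²/n ≤ 1 if and only if there exists c ≥ 0 such that the (2d+1)×(2d+1) real symmetric matrix M(c), with rows and columns indexed by 0, 1, …, 2d and whose only nonzero entries are M(c)_{0,0} = A_0 − c, M(c)_{0,α} = M(c)_{α,0} = (√n/2) A_α for 1 ≤ α ≤ d, M(c)_{α,α} = (n − 1) A_{αα} + c/n for 1 ≤ α ≤ d, and M(c)_{d+α, d+α} = −n A_{αα} + c for 1 ≤ α ≤ d, is positive semidefinite. -/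
open scoped BigOperators

/-- `PQ n d A0 A B X Y = A0 + √n ∑ A_α X_α + (n-1) ∑ A_{αα} X_α² - n ∑ A_{αα} Y_α²` -/
noncomputable def PQ (n d : ℕ) (A0 : ℝ) (A B : Fin d → ℝ) (X Y : Fin d → ℝ) : ℝ :=
  A0 + Real.sqrt n * ∑ α, A α * X α
    + ((n : ℝ) - 1) * ∑ α, B α * (X α) ^ 2
    - n * ∑ α, B α * (Y α) ^ 2

/-- Extend a vector indexed by `Fin d` to `ℕ` by zero. -/
noncomputable def ext (d : ℕ) (A : Fin d → ℝ) (k : ℕ) : ℝ :=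
  if h : k < d then A ⟨k, h⟩ else 0

/-- The matrix `M(c)` of size `(2d+1) × (2d+1)`, with rows and columns indexed by
`0, 1, …, 2d`; its only nonzero entries are `M(c)_{0,0} = A_0 − c`,
`M(c)_{0,α} = M(c)_{α,0} = (√n/2) A_α` for `1 ≤ α ≤ d`,
`M(c)_{α,α} = (n − 1) A_{αα} + c/n` for `1 ≤ α ≤ d`, and
`M(c)_{d+α,d+α} = −n A_{αα} + c` for `1 ≤ α ≤ d`. -/
noncomputable def Mc (n d : ℕ) (A0 : ℝ) (A B : Fin d → ℝ) (c : ℝ) :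
    Matrix (Fin (2 * d + 1)) (Fin (2 * d + 1)) ℝ :=
  fun i j =>
    if i.val = 0 ∧ j.val = 0 then A0 - c
    else if i.val = 0 ∧ 1 ≤ j.val ∧ j.val ≤ d then
      Real.sqrt n / 2 * ext d A (j.val - 1)
    else if j.val = 0 ∧ 1 ≤ i.val ∧ i.val ≤ d then
      Real.sqrt n / 2 * ext d A (i.val - 1)
    else if i = j ∧ 1 ≤ i.val ∧ i.val ≤ d then
      ((n : ℝ) - 1) * ext d B (i.val - 1) + c / n
    else if i = j ∧ d + 1 ≤ i.val then
      -(n : ℝ) * ext d B (i.val - d - 1) + c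
    else 0

/-! In the variables `u = (X, Y)`, `P_Q` is a separable quadratic `a + ∑ g u + ∑ h u²`, the
constraint is the ellipsoid `∑ w u² ≤ 1`, and up to reordering `M(c)` is the arrowhead matrix
of the homogenised Lagrangian `P_Q + c (∑ w u² - 1)`. If `M(c)` is positive semidefinite,
evaluating its form at `(1, u)` gives `P_Q(u) ≥ c (1 - ∑ w u²) ≥ 0`. Conversely, as for the
trust-region subproblem, there is always a KKT pair `(c, u)`. It comes from the intermediate value
theorem applied to the weighted norm of the critical point of the Lagrangian, which tends to `0`
as `c → ∞`; or, if that norm is already `≤ 1` at the least admissible `c`, from a step along a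
flat direction. Completing the square around `u` then writes the form of `M(c)` at `(t, v)` as
`∑ (h + c w) (v - t u)² + t² P_Q(u) ≥ 0`. -/

open Matrix Filter Topology

section Arrowhead

variable {ι : Type*}

noncomputable def arrowhead [DecidableEq ι] (a : ℝ) (g D : ι → ℝ) :
    Matrix (Option ι) (Option ι) ℝ :=
  Matrix.of fun
    | none, none => a
    | none, some j => g j / 2
    | some i, none => g i / 2
    | some i, some j => if i = j then D i else 0

theorem isHermitian_arrowhead [DecidableEq ι] (a : ℝ) (g D : ι → ℝ) :
    (arrowhead a g D).IsHermitian := by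
  ext (_ | i) (_ | j) <;> simp only [arrowhead, conjTranspose_apply, of_apply, star_trivial]
  split_ifs with h h' h' <;> simp_all

variable [Fintype ι]

def arrowheadForm (a : ℝ) (g D : ι → ℝ) (t : ℝ) (v : ι → ℝ) : ℝ :=
  a * t ^ 2 + t * ∑ i, g i * v i + ∑ i, D i * v i ^ 2

theorem dotProduct_arrowhead_mulVec [DecidableEq ι] (a : ℝ) (g D : ι → ℝ)
    (v : Option ι → ℝ) :
    v ⬝ᵥ arrowhead a g D *ᵥ v = arrowheadForm a g D (v none) (v ∘ some) := by
  simp only [dotProduct, mulVec, Fintype.sum_option, arrowhead, arrowheadForm, of_apply,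
    Function.comp_apply, ite_mul, zero_mul, mul_ite, mul_zero, Finset.sum_ite_eq,
    Finset.mem_univ, if_true, mul_add, Finset.mul_sum, add_assoc, ← Finset.sum_add_distrib]
  ring_nf

theorem posSemidef_arrowhead_iff [DecidableEq ι] (a : ℝ) (g D : ι → ℝ) :
    (arrowhead a g D).PosSemidef ↔ ∀ t v, 0 ≤ arrowheadForm a g D t v := by
  simp only [posSemidef_iff_dotProduct_mulVec, star_trivial, dotProduct_arrowhead_mulVec,
    isHermitian_arrowhead, true_and]
  exact ⟨fun H t v => H fun o => o.elim t v, fun H v => H _ _⟩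

theorem arrowheadForm_eq_of_stationary {a : ℝ} {g D u : ι → ℝ}
    (hu : ∀ i, g i = -2 * D i * u i) (t : ℝ) (v : ι → ℝ) :
    arrowheadForm a g D t v =
      ∑ i, D i * (v i - t * u i) ^ 2 + t ^ 2 * arrowheadForm a g D 1 u := by
  have key : t * ∑ i, g i * v i + ∑ i, D i * v i ^ 2 =
      ∑ i, D i * (v i - t * u i) ^ 2 + t ^ 2 * (∑ i, g i * u i + ∑ i, D i * u i ^ 2) := by
    simp only [mul_add, Finset.mul_sum, ← Finset.sum_add_distrib]
    exact Finset.sum_congr rfl fun i _ => by rw [hu]; ring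
  simp only [arrowheadForm]
  linear_combination key

end Arrowhead

section Ellipsoid

variable {ι : Type*} [Fintype ι]

def separableQuadratic (a : ℝ) (g h u : ι → ℝ) : ℝ :=
  a + ∑ i, g i * u i + ∑ i, h i * u i ^ 2

def weightedSqNorm (w u : ι → ℝ) : ℝ := ∑ i, w i * u i ^ 2

theorem arrowheadForm_sub_add_smul_one (a c : ℝ) (w g h u : ι → ℝ) :
    arrowheadForm (a - c) g (h + c • w) 1 u =
      separableQuadratic a g h u + c * (weightedSqNorm w u - 1) := by
  simp only [arrowheadForm, separableQuadratic, weightedSqNorm, Pi.add_apply, Pi.smul_apply,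
    smul_eq_mul, add_mul, mul_sub, mul_assoc, one_mul, Finset.sum_add_distrib, Finset.mul_sum]
  ring

theorem separableQuadratic_nonneg_of_posSemidef [DecidableEq ι] {a c : ℝ} {w g h u : ι → ℝ}
    (hc : 0 ≤ c) (hM : (arrowhead (a - c) g (h + c • w)).PosSemidef)
    (hu : weightedSqNorm w u ≤ 1) :
    0 ≤ separableQuadratic a g h u := by
  have := (posSemidef_arrowhead_iff _ _ _).1 hM 1 u
  rw [arrowheadForm_sub_add_smul_one] at this
  nlinarith

/-- `(c, u)` is a Karush–Kuhn–Tucker pair, with multiplier `c`, for minimising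
`separableQuadratic a g h` over the ellipsoid `weightedSqNorm w u ≤ 1`. -/
structure IsKKTPair (w g h : ι → ℝ) (c : ℝ) (u : ι → ℝ) : Prop where
  nonneg : 0 ≤ c
  curvature_nonneg : ∀ i, 0 ≤ (h + c • w) i
  stationary : ∀ i, g i = -2 * (h + c • w) i * u i
  feasible : weightedSqNorm w u ≤ 1
  complementary : c * (weightedSqNorm w u - 1) = 0

theorem IsKKTPair.posSemidef_arrowhead [DecidableEq ι] {a c : ℝ} {w g h u : ι → ℝ}
    (hcu : IsKKTPair w g h c u)
    (hf : ∀ u, weightedSqNorm w u ≤ 1 → 0 ≤ separableQuadratic a g h u) :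
    (arrowhead (a - c) g (h + c • w)).PosSemidef := by
  rw [posSemidef_arrowhead_iff]
  intro t v
  rw [arrowheadForm_eq_of_stationary hcu.stationary, arrowheadForm_sub_add_smul_one,
    hcu.complementary, add_zero]
  exact add_nonneg
    (Finset.sum_nonneg fun i _ => mul_nonneg (hcu.curvature_nonneg i) (sq_nonneg _))
    (mul_nonneg (sq_nonneg t) (hf u hcu.feasible))

end Ellipsoid

section Existence

variable {ι : Type*} {w : ι → ℝ} (g h : ι → ℝ)

theorem add_smul_apply_le {w h : ι → ℝ} (hw : ∀ i, 0 ≤ w i) {c c' : ℝ} (hcc' : c ≤ c')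
    (i : ι) :
    (h + c • w) i ≤ (h + c' • w) i := by
  simp only [Pi.add_apply, Pi.smul_apply, smul_eq_mul]
  nlinarith [hw i]

/-- The critical point of `u ↦ ∑ i, (g i * u i + (h + c • w) i * u i ^ 2)`, with the junk
value `0` at coordinates where `(h + c • w) i = 0`. -/
noncomputable def stationaryPoint (w g h : ι → ℝ) (c : ℝ) (i : ι) : ℝ :=
  -g i / (2 * (h + c • w) i)

variable {g h} in
theorem stationaryPoint_spec {c : ℝ} (hpos : ∀ i, g i ≠ 0 → 0 < (h + c • w) i) (i : ι) :
    g i = -2 * (h + c • w) i * stationaryPoint w g h c i := by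
  rcases eq_or_ne (g i) 0 with hg | hg
  · simp [stationaryPoint, hg]
  · have := (hpos i hg).ne'
    simp only [stationaryPoint]
    field_simp

variable [Fintype ι]

theorem continuousOn_weightedSqNorm_stationaryPoint (hw : ∀ i, 0 ≤ w i) {c₁ : ℝ}
    (hpos : ∀ i, g i ≠ 0 → 0 < (h + c₁ • w) i) :
    ContinuousOn (fun c => weightedSqNorm w (stationaryPoint w g h c)) (Set.Ici c₁) := by
  refine continuousOn_finsetSum _ fun i _ => continuousOn_const.mul (ContinuousOn.pow ?_ 2)
  rcases eq_or_ne (g i) 0 with hg | hg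
  · simp only [stationaryPoint, hg, neg_zero, zero_div]
    exact continuousOn_const
  · have hD : ContinuousOn (fun c : ℝ => 2 * (h + c • w) i) (Set.Ici c₁) := by
      simp only [Pi.add_apply, Pi.smul_apply, smul_eq_mul]
      fun_prop
    refine continuousOn_const.div hD fun c hc => ?_
    exact (mul_pos two_pos ((hpos i hg).trans_le (add_smul_apply_le hw hc i))).ne'

theorem tendsto_weightedSqNorm_stationaryPoint_atTop (hw : ∀ i, 0 < w i) :
    Tendsto (fun c => weightedSqNorm w (stationaryPoint w g h c)) atTop (𝓝 0) := by
  have hz (i : ι) : Tendsto (fun c => stationaryPoint w g h c i) atTop (𝓝 0) := by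
    have : Tendsto (fun c : ℝ => 2 * (h + c • w) i) atTop atTop := by
      simp only [Pi.add_apply, Pi.smul_apply, smul_eq_mul]
      exact (tendsto_atTop_add_const_left _ _
        (tendsto_id.atTop_mul_const (hw i))).const_mul_atTop two_pos
    exact tendsto_const_nhds.div_atTop this
  simpa [weightedSqNorm] using tendsto_finsetSum _ fun i _ => ((hz i).pow 2).const_mul (w i)

theorem exists_weightedSqNorm_stationaryPoint_eq_one (hw : ∀ i, 0 < w i) {c₁ : ℝ}
    (hpos : ∀ i, g i ≠ 0 → 0 < (h + c₁ • w) i)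
    (h1 : 1 ≤ weightedSqNorm w (stationaryPoint w g h c₁)) :
    ∃ c, c₁ ≤ c ∧ weightedSqNorm w (stationaryPoint w g h c) = 1 := by
  have hsmall := (tendsto_order.1 (tendsto_weightedSqNorm_stationaryPoint_atTop g h hw)).2 1 one_pos
  obtain ⟨c₂, hc₂, hc₁₂⟩ := (hsmall.and (eventually_ge_atTop c₁)).exists
  obtain ⟨c, hc, hc1⟩ := intermediate_value_Icc' hc₁₂
    ((continuousOn_weightedSqNorm_stationaryPoint g h (fun i => (hw i).le) hpos).mono
      Set.Icc_subset_Ici_self) ⟨hc₂.le, h1⟩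
  exact ⟨c, hc.1, hc1⟩

theorem exists_one_le_weightedSqNorm_stationaryPoint (hw : ∀ i, 0 < w i) {c₀ : ℝ} {j : ι}
    (hj : (h + c₀ • w) j = 0) (hgj : g j ≠ 0) :
    ∃ c, c₀ < c ∧ 1 ≤ weightedSqNorm w (stationaryPoint w g h c) := by
  set t := Real.sqrt (w j) * |g j| / 2
  have ht : 0 < t := by have := hw j; have := abs_pos.2 hgj; positivity
  have hD : (h + (c₀ + t / w j) • w) j = t := by
    simp only [Pi.add_apply, Pi.smul_apply, smul_eq_mul] at hj ⊢
    rw [add_mul, div_mul_cancel₀ _ (hw j).ne']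
    linarith
  have ht2 : (2 * t) ^ 2 = w j * g j ^ 2 := by
    rw [show 2 * t = Real.sqrt (w j) * |g j| by ring, mul_pow, Real.sq_sqrt (hw j).le, sq_abs]
  have hterm : w j * stationaryPoint w g h (c₀ + t / w j) j ^ 2 = 1 := by
    rw [stationaryPoint, hD, div_pow, neg_sq, ht2]
    have := (hw j).ne'
    field_simp
  refine ⟨c₀ + t / w j, by linarith [div_pos ht (hw j)], hterm.symm.trans_le ?_⟩
  exact Finset.single_le_sum (f := fun i => w i * stationaryPoint w g h (c₀ + t / w j) i ^ 2)
    (fun i _ => mul_nonneg (hw i).le (sq_nonneg _)) (Finset.mem_univ j)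

theorem weightedSqNorm_update [DecidableEq ι] (w u : ι → ℝ) {j : ι} (hj : u j = 0)
    (s : ℝ) :
    weightedSqNorm w (Function.update u j s) = weightedSqNorm w u + w j * s ^ 2 := by
  have hrest : ∑ i ∈ Finset.univ.erase j, w i * Function.update u j s i ^ 2 =
      ∑ i ∈ Finset.univ.erase j, w i * u i ^ 2 :=
    Finset.sum_congr rfl fun i hi => by rw [Function.update_of_ne (Finset.ne_of_mem_erase hi)]
  simp only [weightedSqNorm]
  rw [← Finset.add_sum_erase _ _ (Finset.mem_univ j),
    ← Finset.add_sum_erase _ _ (Finset.mem_univ j), hrest, Function.update_self, hj]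
  ring

theorem exists_least_shift (hw : ∀ i, 0 < w i) :
    ∃ c₀ : ℝ, 0 ≤ c₀ ∧ (∀ i, 0 ≤ (h + c₀ • w) i) ∧
      (c₀ = 0 ∨ ∃ j, (h + c₀ • w) j = 0) := by
  classical
  set S := insert 0 (Finset.univ.image fun i => -h i / w i)
  have hS : S.Nonempty := Finset.insert_nonempty _ _
  refine ⟨S.max' hS, S.le_max' 0 (Finset.mem_insert_self _ _), fun i => ?_, ?_⟩
  · have := S.le_max' (-h i / w i)
      (Finset.mem_insert_of_mem (Finset.mem_image_of_mem _ (Finset.mem_univ i)))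
    rw [div_le_iff₀ (hw i)] at this
    simp only [Pi.add_apply, Pi.smul_apply, smul_eq_mul]
    linarith
  · rcases Finset.mem_insert.1 (S.max'_mem hS) with h0 | hj
    · exact Or.inl h0
    · obtain ⟨j, -, hj⟩ := Finset.mem_image.1 hj
      refine Or.inr ⟨j, ?_⟩
      rw [← hj]
      simp only [Pi.add_apply, Pi.smul_apply, smul_eq_mul]
      field_simp [(hw j).ne']
      ring

theorem exists_isKKTPair_of_one_le (hw : ∀ i, 0 < w i) {c₁ : ℝ} (hc₁ : 0 ≤ c₁)
    (hD : ∀ i, 0 ≤ (h + c₁ • w) i) (hpos : ∀ i, g i ≠ 0 → 0 < (h + c₁ • w) i)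
    (h1 : 1 ≤ weightedSqNorm w (stationaryPoint w g h c₁)) :
    ∃ c u, IsKKTPair w g h c u := by
  obtain ⟨c, hc, hnorm⟩ := exists_weightedSqNorm_stationaryPoint_eq_one g h hw hpos h1
  have hmono := add_smul_apply_le (h := h) (fun i => (hw i).le) hc
  refine ⟨c, _, hc₁.trans hc, fun i => (hD i).trans (hmono i),
    stationaryPoint_spec fun i hi => (hpos i hi).trans_le (hmono i), hnorm.le, ?_⟩
  rw [hnorm, sub_self, mul_zero]

theorem exists_isKKTPair_of_le_one (hw : ∀ i, 0 < w i) {c₀ : ℝ} (hc₀ : 0 ≤ c₀)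
    (hD : ∀ i, 0 ≤ (h + c₀ • w) i) (htight : c₀ = 0 ∨ ∃ j, (h + c₀ • w) j = 0)
    (hpos : ∀ i, g i ≠ 0 → 0 < (h + c₀ • w) i)
    (h1 : weightedSqNorm w (stationaryPoint w g h c₀) ≤ 1) :
    ∃ u, IsKKTPair w g h c₀ u := by
  classical
  have hstat := stationaryPoint_spec hpos
  rcases htight with rfl | ⟨j, hj⟩
  · exact ⟨_, le_rfl, hD, hstat, h1, zero_mul _⟩
  -- the multiplier is pinned by a flat direction `j`; moving along it absorbs the slack
  have hgj : g j = 0 := by_contra fun hg => (hpos j hg).ne' hj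
  have hzj : stationaryPoint w g h c₀ j = 0 := by simp [stationaryPoint, hgj]
  set s := Real.sqrt ((1 - weightedSqNorm w (stationaryPoint w g h c₀)) / w j)
  have hnorm : weightedSqNorm w (Function.update (stationaryPoint w g h c₀) j s) = 1 := by
    rw [weightedSqNorm_update _ _ hzj, Real.sq_sqrt (div_nonneg (by linarith) (hw j).le),
      mul_div_cancel₀ _ (hw j).ne']
    ring
  refine ⟨Function.update (stationaryPoint w g h c₀) j s, hc₀, hD, fun i => ?_, hnorm.le,
    by rw [hnorm, sub_self, mul_zero]⟩
  rcases eq_or_ne i j with rfl | hij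
  · simp [hgj, hj]
  · rw [Function.update_of_ne hij]
    exact hstat i

theorem exists_isKKTPair (hw : ∀ i, 0 < w i) : ∃ c u, IsKKTPair w g h c u := by
  obtain ⟨c₀, hc₀, hD, htight⟩ := exists_least_shift h hw
  by_cases hpos : ∀ i, g i ≠ 0 → 0 < (h + c₀ • w) i
  · rcases le_total 1 (weightedSqNorm w (stationaryPoint w g h c₀)) with h1 | h1
    · exact exists_isKKTPair_of_one_le g h hw hc₀ hD hpos h1
    · exact ⟨c₀, exists_isKKTPair_of_le_one g h hw hc₀ hD htight hpos h1⟩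
  push Not at hpos
  obtain ⟨j, hgj, hj⟩ := hpos
  obtain ⟨c₁, hc₀₁, h1⟩ :=
    exists_one_le_weightedSqNorm_stationaryPoint g h hw (le_antisymm hj (hD j)) hgj
  have hpos₁ (i : ι) : 0 < (h + c₁ • w) i := by
    have := hD i
    simp only [Pi.add_apply, Pi.smul_apply, smul_eq_mul] at this ⊢
    nlinarith [hw i]
  exact exists_isKKTPair_of_one_le g h hw (hc₀.trans hc₀₁.le) (fun i => (hpos₁ i).le)
    (fun i _ => hpos₁ i) h1

theorem separableQuadratic_nonneg_on_ellipsoid_iff [DecidableEq ι] (hw : ∀ i, 0 < w i)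
    (a : ℝ) :
    (∀ u, weightedSqNorm w u ≤ 1 → 0 ≤ separableQuadratic a g h u) ↔
      ∃ c, 0 ≤ c ∧ (arrowhead (a - c) g (h + c • w)).PosSemidef := by
  refine ⟨fun hf => ?_,
    fun ⟨c, hc, hM⟩ u hu => separableQuadratic_nonneg_of_posSemidef hc hM hu⟩
  obtain ⟨c, u, hcu⟩ := exists_isKKTPair g h hw
  exact ⟨c, hcu.nonneg, hcu.posSemidef_arrowhead hf⟩

end Existence

section PQ

variable (n d : ℕ)

noncomputable def pqWeight : Fin d ⊕ Fin d → ℝ :=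
  Sum.elim (fun _ => (n : ℝ)⁻¹) fun _ => 1

noncomputable def pqLinear (A : Fin d → ℝ) : Fin d ⊕ Fin d → ℝ :=
  Sum.elim (fun α => Real.sqrt n * A α) 0

def pqCurvature (B : Fin d → ℝ) : Fin d ⊕ Fin d → ℝ :=
  Sum.elim (fun α => ((n : ℝ) - 1) * B α) fun α => -(n : ℝ) * B α

variable {n} in
theorem pqWeight_pos (hn : 0 < n) (i : Fin d ⊕ Fin d) : 0 < pqWeight n d i := by
  rcases i with _ | _
  · simpa [pqWeight] using hn
  · simp [pqWeight]

theorem PQ_eq_separableQuadratic (A0 : ℝ) (A B X Y : Fin d → ℝ) :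
    PQ n d A0 A B X Y =
      separableQuadratic A0 (pqLinear n d A) (pqCurvature n d B) (Sum.elim X Y) := by
  simp only [PQ, separableQuadratic, pqLinear, pqCurvature, Fintype.sum_sum_type, Sum.elim_inl,
    Sum.elim_inr, Pi.zero_apply, zero_mul, Finset.sum_const_zero, add_zero, neg_mul,
    Finset.sum_neg_distrib, Finset.mul_sum, mul_assoc]
  ring_nf

theorem weightedSqNorm_pqWeight (X Y : Fin d → ℝ) :
    weightedSqNorm (pqWeight n d) (Sum.elim X Y) = ∑ α, Y α ^ 2 + (∑ α, X α ^ 2) / n := by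
  simp only [weightedSqNorm, pqWeight, Fintype.sum_sum_type, Sum.elim_inl, Sum.elim_inr, one_mul,
    div_eq_inv_mul, Finset.mul_sum]
  ring

/-- Row `0` of `Mc` is the homogenising coordinate, rows `1, …, d` belong to `X` and rows
`d + 1, …, 2 * d` to `Y`. -/
def mcIndexEquiv : Option (Fin d ⊕ Fin d) ≃ Fin (2 * d + 1) :=
  (Equiv.optionCongr (finSumFinEquiv.trans (finCongr (two_mul d).symm))).trans
    (finSuccEquiv (2 * d)).symm

theorem Mc_submatrix_mcIndexEquiv (A0 : ℝ) (A B : Fin d → ℝ) (c : ℝ) :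
    (Mc n d A0 A B c).submatrix (mcIndexEquiv d) (mcIndexEquiv d) =
      arrowhead (A0 - c) (pqLinear n d A) (pqCurvature n d B + c • pqWeight n d) := by
  ext (_ | α | α) (_ | β | β) <;>
    simp [Mc, mcIndexEquiv, arrowhead, pqLinear, pqCurvature, pqWeight, _root_.ext, Fin.ext_iff,
      add_comm] <;>
    first | ring1 | grind

theorem Mc_posSemidef_iff (A0 : ℝ) (A B : Fin d → ℝ) (c : ℝ) :
    (Mc n d A0 A B c).PosSemidef ↔
      (arrowhead (A0 - c) (pqLinear n d A)
        (pqCurvature n d B + c • pqWeight n d)).PosSemidef := by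
  rw [← posSemidef_submatrix_equiv (mcIndexEquiv d), Mc_submatrix_mcIndexEquiv]

end PQ

theorem stmt_10_general (n d : ℕ) (hn : 2 ≤ n)
    (A0 : ℝ) (A B : Fin d → ℝ) :
    (∀ X Y : Fin d → ℝ,
      (∑ α, (Y α) ^ 2) + (∑ α, (X α) ^ 2) / n ≤ 1 →
      0 ≤ PQ n d A0 A B X Y) ↔
    (∃ c : ℝ, 0 ≤ c ∧ (Mc n d A0 A B c).PosSemidef) := by
  simp_rw [Mc_posSemidef_iff,
    ← separableQuadratic_nonneg_on_ellipsoid_iff _ _ (pqWeight_pos d (by omega : 0 < n)),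
    PQ_eq_separableQuadratic, ← weightedSqNorm_pqWeight]
  exact ⟨fun H u => by simpa using H (u ∘ Sum.inl) (u ∘ Sum.inr), fun H X Y => H _⟩

theorem stmt_10 (n d : ℕ) (hn : 2 ≤ n) (hd : 1 ≤ d)
    (A0 : ℝ) (A B : Fin d → ℝ) :
    (∀ X Y : Fin d → ℝ,
      (∑ α, (Y α) ^ 2) + (∑ α, (X α) ^ 2) / n ≤ 1 →
      0 ≤ PQ n d A0 A B X Y) ↔
    (∃ c : ℝ, 0 ≤ c ∧ (Mc n d A0 A B c).PosSemidef) :=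
  stmt_10_general n d hn A0 A B
end

section
/- Let n ≥ 1 and d ≥ 1 be integers and let X = (X_1, …, X_d) ∈ ℝ^d satisfy ‖X‖² = X_1² + ⋯ + X_d² ≤ n. Then there exists x = (x_1, …, x_n) ∈ K_n^d, with x_i = (ξ_{i,1}, …, ξ_{i,d}), such that: (a) Σ_{i=1}^n ξ_{i,α}/√n = X_α for all 1 ≤ α ≤ d; (b) Σ_{i=1}^n ξ_{i,α}²/n − X_α²/n = 0 for all 1 ≤ α ≤ d − 1; and (c) |(Σ_{i=1}^n ξ_{i,d}²/n − X_d²/n) − (1 − ‖X‖²/n)| ≤ 1/n. -/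
open scoped BigOperators

open Finset

/-! Put `X_α / √n` in every coordinate `α < d` except the last one; this settles (a) and (b)
exactly. For the last coordinate one needs `n` numbers in `[-R, R]`, where
`R² = 1 - (‖X‖² - X_d²) / n`, with sum `√n X_d`. Taking them one at a time equal to `±R`, with
the sign of the remaining target, keeps that target within reach of the numbers still to be
chosen, so at most one of them is not `±R`; hence their sum of squares is within `R² ≤ 1` of
`n R²`, which is (c). -/

theorem Fintype.sum_comp_update {ι β M : Type*} [Fintype ι] [DecidableEq ι] [AddCommGroup M]
    (φ : β → M) (f : ι → β) (a : ι) (v : β) :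
    ∑ i, φ (Function.update f a v i) = ∑ i, φ (f i) - φ (f a) + φ v := by
  have herase : ∑ i ∈ univ.erase a, φ (Function.update f a v i) = ∑ i ∈ univ.erase a, φ (f i) :=
    Finset.sum_congr rfl fun i hi => by rw [Function.update_of_ne (ne_of_mem_erase hi)]
  rw [← add_sum_erase _ _ (mem_univ a), ← add_sum_erase _ (fun i => φ (f i)) (mem_univ a),
    Function.update_self, herase]
  abel

theorem exists_abs_le_sum_eq_sum_sq_near_max {n : ℕ} (hn : 1 ≤ n) {R S : ℝ} (hS : |S| ≤ n * R) :
    ∃ g : Fin n → ℝ, (∀ i, |g i| ≤ R) ∧ ∑ i, g i = S ∧ |∑ i, g i ^ 2 - n * R ^ 2| ≤ R ^ 2 := by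
  induction n, hn using Nat.le_induction generalizing S with
  | base =>
    simp only [Nat.cast_one, one_mul] at hS
    refine ⟨fun _ => S, fun _ => hS, by simp, ?_⟩
    have : S ^ 2 ≤ R ^ 2 := sq_le_sq' (abs_le.mp hS).1 (abs_le.mp hS).2
    simp only [univ_unique, sum_singleton, Nat.cast_one, one_mul, abs_le]
    constructor <;> nlinarith [sq_nonneg S]
  | succ n hn ih =>
    have hR : 0 ≤ R := by
      have : (0 : ℝ) ≤ (n + 1 : ℕ) * R := (abs_nonneg S).trans hS
      exact nonneg_of_mul_nonneg_right (by simpa [mul_comm] using this) (by positivity)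
    have hRn : R ≤ n * R := le_mul_of_one_le_left hR (by exact_mod_cast hn)
    obtain ⟨r, hr_abs, hrest⟩ : ∃ r, |r| = R ∧ |S - r| ≤ n * R := by
      push_cast at hS
      rw [abs_le] at hS
      by_cases hS0 : 0 ≤ S
      · exact ⟨R, abs_of_nonneg hR, abs_le.mpr ⟨by linarith, by linarith⟩⟩
      · exact ⟨-R, by simp [abs_of_nonneg hR], abs_le.mpr ⟨by linarith, by linarith⟩⟩
    obtain ⟨g, hgR, hgsum, hgsq⟩ := ih hrest
    refine ⟨Fin.cons r g, Fin.cases hr_abs.le hgR, ?_, ?_⟩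
    · simp [Fin.sum_univ_succ, hgsum]
    · have hr2 : r ^ 2 = R ^ 2 := by rw [← sq_abs, hr_abs]
      rw [Fin.sum_univ_succ]
      simp only [Fin.cons_zero, Fin.cons_succ, hr2]
      push_cast
      convert hgsq using 2
      ring

theorem exists_sq_le_sum_eq_sqrt_mul_sum_sq_near {n : ℕ} (hn : 1 ≤ n) {q y : ℝ} (hq : 0 ≤ q)
    (hqy : q + y ^ 2 ≤ n) :
    ∃ g : Fin n → ℝ, (∀ i, g i ^ 2 ≤ 1 - q / n) ∧ ∑ i, g i = √n * y ∧
      |∑ i, g i ^ 2 - (n - q)| ≤ 1 := by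
  have hn0 : (0 : ℝ) < n := by exact_mod_cast hn
  set R := √(1 - q / n)
  have hR : R ^ 2 = 1 - q / n :=
    Real.sq_sqrt (by rw [sub_nonneg, div_le_one hn0]; linarith [sq_nonneg y])
  have hnR : n * R ^ 2 = n - q := by rw [hR]; field_simp
  have hSR : |√n * y| ≤ n * R := by
    refine abs_le_of_sq_le_sq ?_ (by positivity)
    rw [mul_pow, mul_pow, Real.sq_sqrt hn0.le, hR]
    field_simp
    nlinarith
  obtain ⟨g, hgR, hgsum, hgsq⟩ := exists_abs_le_sum_eq_sum_sq_near_max hn hSR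
  refine ⟨g, fun i => hR ▸ sq_le_sq' (abs_le.mp (hgR i)).1 (abs_le.mp (hgR i)).2, hgsum, ?_⟩
  rw [← hnR]
  exact hgsq.trans (hR ▸ sub_le_self 1 (div_nonneg hq hn0.le))

theorem sum_const_div_sqrt_div_sqrt {n : ℕ} (hn : n ≠ 0) (y : ℝ) :
    (∑ _ : Fin n, y / √n) / √n = y := by
  have hn0 : (0 : ℝ) ≤ n := n.cast_nonneg
  rw [sum_const, card_univ, Fintype.card_fin, nsmul_eq_mul, mul_div_assoc, div_div,
    Real.mul_self_sqrt hn0]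
  field_simp

theorem sum_sq_const_div_sqrt {n : ℕ} (hn : n ≠ 0) (y : ℝ) :
    ∑ _ : Fin n, (y / √n) ^ 2 = y ^ 2 := by
  rw [sum_const, card_univ, Fintype.card_fin, nsmul_eq_mul, div_pow, Real.sq_sqrt n.cast_nonneg]
  field_simp

theorem stmt_11 (n d : ℕ) (hn : 1 ≤ n) (hd : 1 ≤ d)
    (X : Fin d → ℝ) (hX : ∑ α, (X α) ^ 2 ≤ (n : ℝ)) :
    ∃ x : Fin n → Fin d → ℝ,
      -- x ∈ K_n^d
      (∀ i, ∑ α, (x i α) ^ 2 ≤ 1) ∧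
      -- (a)
      (∀ α, (∑ i, x i α) / Real.sqrt n = X α) ∧
      -- (b) : for 1 ≤ α ≤ d − 1 (i.e. all indices except the last one)
      (∀ α : Fin d, (α : ℕ) + 1 < d →
        (∑ i, (x i α) ^ 2) / n - (X α) ^ 2 / n = 0) ∧
      -- (c) : for the last index α = d
      (∀ α : Fin d, (α : ℕ) + 1 = d →
        |((∑ i, (x i α) ^ 2) / n - (X α) ^ 2 / n)
          - (1 - (∑ β, (X β) ^ 2) / n)| ≤ 1 / (n : ℝ)) := by
  have hn0 : (0 : ℝ) < n := by exact_mod_cast hn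
  set a : Fin d := ⟨d - 1, by omega⟩
  set Q := ∑ β, X β ^ 2
  have hQa : 0 ≤ Q - X a ^ 2 :=
    sub_nonneg.mpr (single_le_sum (fun β _ => sq_nonneg (X β)) (mem_univ a))
  obtain ⟨g, hg, hgsum, hgsq⟩ :=
    exists_sq_le_sum_eq_sqrt_mul_sum_sq_near hn hQa (by linarith : Q - X a ^ 2 + X a ^ 2 ≤ n)
  refine ⟨fun i => Function.update (fun α => X α / √n) a (g i), fun i => ?_, fun α => ?_,
    fun α hα => ?_, fun α hα => ?_⟩
  · beta_reduce
    rw [Fintype.sum_comp_update (· ^ 2)]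
    simp only [div_pow, Real.sq_sqrt hn0.le, ← sum_div]
    linarith [hg i, sub_div Q (X a ^ 2) n]
  · by_cases h : α = a
    · simp only [h, Function.update_self, hgsum]
      field_simp
    · simp only [Function.update_of_ne h]
      exact sum_const_div_sqrt_div_sqrt (by omega) (X α)
  · have h : α ≠ a := Fin.ne_of_val_ne (by simp only [a]; omega)
    simp only [Function.update_of_ne h, sum_sq_const_div_sqrt (by omega : n ≠ 0), sub_self]
  · have h : α = a := Fin.ext (by simp [a]; omega)
    simp only [h, Function.update_self]
    have hexpr : (∑ i, g i ^ 2) / n - X a ^ 2 / n - (1 - Q / n)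
        = (∑ i, g i ^ 2 - (n - (Q - X a ^ 2))) / n := by
      field_simp
      ring
    rw [hexpr, abs_div, abs_of_pos hn0]
    exact div_le_div_of_nonneg_right hgsq hn0.le
end
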